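/- arXiv:1412.4171 — 10 statements merged into one kernel-verified Lean document; each statement's English description precedes it below -/
import Mathlib

section
/- Let (Ω, F, (F_k)_{k≥0}, P) be a filtered probability space, d ≥ 1, and f : ℝ^d → ℝ^d a function with ‖f(x)‖_∞ ≤ B for all x and ‖f(x) − f(z)‖_∞ ≤ L‖x − z‖_∞ for all x, z. For an integer N ≥ 1, let (ρ_k)_{k≥0} be an adapted ℝ^d-valued process with ρ_0 deterministic satisfying ρ_{k+1} = ρ_k + (1/N)(f(ρ_k) + w_{k+1}), where E[w_{k+1} | F_k] = 0 and ‖w_{k+1}‖_∞ ≤ Γ almost surely for all k. Let (θ_k) be the deterministic mean-field recursion θ_0 = ρ_0, θ_{k+1} = θ_k + (1/N) f(θ_k). Then for every c > 0 there exist constants C_1, C_2 > 0, depending only on d, B, L, Γ, c (and not on N or ε), such that for every N ≥ 1, every ε > 0, and every integer horizon T with T ≤ cN, P( max_{0 ≤ k ≤ T} ‖ρ_k − θ_k‖_∞ ≥ ε ) ≤ C_1 exp(−C_2 ε² N). -/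
open MeasureTheory ProbabilityTheory Finset Real
open scoped NNReal

/-!
Write `S k = ∑_{j < k} w (j + 1)` for the accumulated noise. Subtracting the two recursions,
`e k = ρ k - θ k - S k / N` satisfies `‖e (k + 1)‖ ≤ ‖e k‖ + (L / N) ‖ρ k - θ k‖`, so by discrete
Gronwall `‖ρ k - θ k‖ ≤ e^{L c} max_{j ≤ T} ‖S j‖ / N` for `k ≤ T ≤ c N`: a deviation `ε` forces
some coordinate of `± S k` to reach `r = ε N e^{-L c} / 2`. For a fixed coordinate and sign,
`exp (t S k)` is a nonnegative submartingale with mean at most `cosh (t Γ) ^ k ≤ exp (k t² Γ² / 2)`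
(Hoeffding's convexity bound), so Doob's maximal inequality with the optimal `t` bounds the
probability that the running maximum reaches `r` by `exp (-r² / (2 c N Γ²))`. A union bound over
the `2 d` coordinates and signs finishes.
-/

lemma exp_mul_le_cosh_add_sinh_div_mul {t G x : ℝ} (hG : 0 < G) (hx : |x| ≤ G) :
    exp (t * x) ≤ cosh (t * G) + sinh (t * G) / G * x := by
  obtain ⟨hx₁, hx₂⟩ := abs_le.mp hx
  have ha : 0 ≤ (G + x) / (2 * G) := div_nonneg (by linarith) (by positivity)
  have hb : 0 ≤ (G - x) / (2 * G) := div_nonneg (by linarith) (by positivity)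
  have key := convexOn_exp.2 (Set.mem_univ (t * G)) (Set.mem_univ (-(t * G))) ha hb
    (by field_simp; ring)
  refine le_of_eq_of_le ?_ (key.trans_eq ?_)
  · congr 1; simp only [smul_eq_mul]; field_simp; ring
  · rw [Real.cosh_eq, Real.sinh_eq]; simp only [smul_eq_mul]; field_simp; ring

lemma integral_mul_eq_zero_of_condExp_eq_zero {Ω : Type*} {m mΩ : MeasurableSpace Ω}
    {P : Measure Ω} [IsFiniteMeasure P] (hm : m ≤ mΩ) {Y v : Ω → ℝ}
    (hY : StronglyMeasurable[m] Y) (hYv : Integrable (Y * v) P) (hv : Integrable v P)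
    (hcond : P[v|m] =ᵐ[P] 0) :
    ∫ ω, Y ω * v ω ∂P = 0 := by
  have h : P[Y * v|m] =ᵐ[P] 0 := by
    filter_upwards [condExp_mul_of_stronglyMeasurable_left hY hYv hv, hcond] with ω h₁ h₂
    simp [h₁, h₂]
  calc ∫ ω, Y ω * v ω ∂P = ∫ ω, (P[Y * v|m]) ω ∂P := (integral_condExp hm).symm
    _ = 0 := by simp [integral_congr_ae h]

theorem MeasureTheory.Submartingale.measure_exists_le_le_integral_div {Ω : Type*}
    {mΩ : MeasurableSpace Ω} {P : Measure Ω} [IsFiniteMeasure P] {F : Filtration ℕ mΩ}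
    {X : ℕ → Ω → ℝ} (hsub : Submartingale X F P) (hnonneg : 0 ≤ X) {r : ℝ} (hr : 0 < r)
    (n : ℕ) :
    P {ω | ∃ k ≤ n, r ≤ X k ω} ≤ ENNReal.ofReal ((∫ ω, X n ω ∂P) / r) := by
  set M : Set Ω := {ω | (r.toNNReal : ℝ) ≤ (range (n + 1)).sup' nonempty_range_add_one (X · ω)}
  have hM : {ω | ∃ k ≤ n, r ≤ X k ω} = M := by
    ext ω
    simp [M, le_sup'_iff, hr.le]
  have hdoob := maximal_ineq hsub hnonneg (ε := r.toNNReal) n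
  have hint : ∫ ω in M, X n ω ∂P ≤ ∫ ω, X n ω ∂P :=
    setIntegral_le_integral (hsub.integrable n) (ae_of_all _ (hnonneg n))
  rw [hM, ENNReal.ofReal_div_of_pos hr, ENNReal.le_div_iff_mul_le (by simp [hr]) (by simp),
    mul_comm, ENNReal.ofReal]
  exact hdoob.trans (ENNReal.ofReal_le_ofReal hint)

section ExponentialMartingale

variable {Ω : Type*} {mΩ : MeasurableSpace Ω} {P : Measure Ω} [IsProbabilityMeasure P]
  {F : Filtration ℕ mΩ} {v : ℕ → Ω → ℝ} {G t : ℝ}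

noncomputable def expPartialSum (v : ℕ → Ω → ℝ) (t : ℝ) (k : ℕ) (ω : Ω) : ℝ :=
  exp (t * ∑ j ∈ range k, v (j + 1) ω)

lemma expPartialSum_succ (k : ℕ) (ω : Ω) :
    expPartialSum v t (k + 1) ω = expPartialSum v t k ω * exp (t * v (k + 1) ω) := by
  simp only [expPartialSum, sum_range_succ, mul_add, exp_add]

lemma expPartialSum_pos (k : ℕ) (ω : Ω) : 0 < expPartialSum v t k ω := exp_pos _

lemma expPartialSum_le {ω : Ω} (hv : ∀ j, |v (j + 1) ω| ≤ G) (k : ℕ) :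
    expPartialSum v t k ω ≤ exp (|t| * (k * G)) := by
  refine exp_le_exp.2 ((le_abs_self _).trans ?_)
  rw [abs_mul]
  gcongr
  calc |∑ j ∈ range k, v (j + 1) ω| ≤ ∑ j ∈ range k, |v (j + 1) ω| := abs_sum_le_sum_abs _ _
    _ ≤ ∑ _j ∈ range k, G := sum_le_sum fun j _ => hv j
    _ = k * G := by simp

lemma stronglyMeasurable_expPartialSum (hmeas : ∀ k, StronglyMeasurable[F (k + 1)] (v (k + 1)))
    (k : ℕ) : StronglyMeasurable[F k] (expPartialSum v t k) := by
  refine continuous_exp.comp_stronglyMeasurable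
    ((stronglyMeasurable_fun_sum _ fun j hj => ?_).const_mul t)
  exact (hmeas j).mono (F.mono (mem_range.mp hj))

lemma integrable_succ_of_abs_le (hmeas : ∀ k, StronglyMeasurable[F (k + 1)] (v (k + 1)))
    (hbdd : ∀ k, ∀ᵐ ω ∂P, |v (k + 1) ω| ≤ G) (k : ℕ) : Integrable (v (k + 1)) P :=
  .of_bound ((hmeas k).mono (F.le _)).aestronglyMeasurable G (hbdd k)

lemma integrable_mul_succ_of_abs_le (hmeas : ∀ k, StronglyMeasurable[F (k + 1)] (v (k + 1)))
    (hbdd : ∀ k, ∀ᵐ ω ∂P, |v (k + 1) ω| ≤ G) {Y : Ω → ℝ} (hY : Integrable Y P) (k : ℕ) :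
    Integrable (fun ω => Y ω * v (k + 1) ω) P :=
  hY.mul_bdd (integrable_succ_of_abs_le hmeas hbdd k).aestronglyMeasurable (hbdd k)

lemma integrable_expPartialSum (hmeas : ∀ k, StronglyMeasurable[F (k + 1)] (v (k + 1)))
    (hbdd : ∀ k, ∀ᵐ ω ∂P, |v (k + 1) ω| ≤ G) (k : ℕ) : Integrable (expPartialSum v t k) P := by
  refine .of_bound ((stronglyMeasurable_expPartialSum hmeas k).mono (F.le k)).aestronglyMeasurable
    (exp (|t| * (k * G))) ?_
  filter_upwards [ae_all_iff.2 hbdd] with ω hω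
  rw [expPartialSum, Real.norm_of_nonneg (exp_pos _).le]
  exact expPartialSum_le hω k

lemma setIntegral_expPartialSum_mul_eq_zero
    (hmeas : ∀ k, StronglyMeasurable[F (k + 1)] (v (k + 1)))
    (hcond : ∀ k, P[v (k + 1)|F k] =ᵐ[P] 0) (hbdd : ∀ k, ∀ᵐ ω ∂P, |v (k + 1) ω| ≤ G)
    (k : ℕ) {s : Set Ω} (hs : MeasurableSet[F k] s) :
    ∫ ω in s, expPartialSum v t k ω * v (k + 1) ω ∂P = 0 := by
  rw [← integral_indicator (F.le k s hs)]
  simp_rw [Set.indicator_mul_left]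
  refine integral_mul_eq_zero_of_condExp_eq_zero (F.le k)
    ((stronglyMeasurable_expPartialSum hmeas k).indicator hs) ?_
    (integrable_succ_of_abs_le hmeas hbdd k) (hcond k)
  exact integrable_mul_succ_of_abs_le hmeas hbdd
    ((integrable_expPartialSum hmeas hbdd k).indicator (F.le k s hs)) k

lemma submartingale_expPartialSum (hmeas : ∀ k, StronglyMeasurable[F (k + 1)] (v (k + 1)))
    (hcond : ∀ k, P[v (k + 1)|F k] =ᵐ[P] 0) (hbdd : ∀ k, ∀ᵐ ω ∂P, |v (k + 1) ω| ≤ G) :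
    Submartingale (expPartialSum v t) F P := by
  refine submartingale_of_setIntegral_le_succ (fun k => stronglyMeasurable_expPartialSum hmeas k)
    (integrable_expPartialSum hmeas hbdd) fun k s hs => ?_
  have hX := integrable_expPartialSum (t := t) hmeas hbdd k
  have hXv := integrable_mul_succ_of_abs_le hmeas hbdd hX k
  -- `1 + t v ≤ exp (t v)`, and the linear term integrates to zero over `F k`-events
  calc ∫ ω in s, expPartialSum v t k ω ∂P
      = ∫ ω in s, (expPartialSum v t k ω + t * (expPartialSum v t k ω * v (k + 1) ω)) ∂P := by
        rw [integral_add hX.integrableOn (hXv.const_mul t).integrableOn, integral_const_mul,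
          setIntegral_expPartialSum_mul_eq_zero hmeas hcond hbdd k hs, mul_zero, add_zero]
    _ ≤ ∫ ω in s, expPartialSum v t (k + 1) ω ∂P := by
        refine setIntegral_mono (hX.add (hXv.const_mul t)).integrableOn
          (integrable_expPartialSum hmeas hbdd (k + 1)).integrableOn fun ω => ?_
        rw [expPartialSum_succ]
        have := mul_le_mul_of_nonneg_left (add_one_le_exp (t * v (k + 1) ω))
          (expPartialSum_pos (v := v) (t := t) k ω).le
        linarith

lemma integral_expPartialSum_le (hmeas : ∀ k, StronglyMeasurable[F (k + 1)] (v (k + 1)))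
    (hcond : ∀ k, P[v (k + 1)|F k] =ᵐ[P] 0) (hG : 0 < G) (hbdd : ∀ k, ∀ᵐ ω ∂P, |v (k + 1) ω| ≤ G)
    (k : ℕ) : ∫ ω, expPartialSum v t k ω ∂P ≤ cosh (t * G) ^ k := by
  induction k with
  | zero => simp [expPartialSum]
  | succ k ih =>
    have hX := integrable_expPartialSum (t := t) hmeas hbdd k
    have hXv := integrable_mul_succ_of_abs_le hmeas hbdd hX k
    have hzero : ∫ ω, expPartialSum v t k ω * v (k + 1) ω ∂P = 0 := by
      simpa using setIntegral_expPartialSum_mul_eq_zero hmeas hcond hbdd k MeasurableSet.univ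
    calc ∫ ω, expPartialSum v t (k + 1) ω ∂P
        ≤ ∫ ω, (cosh (t * G) * expPartialSum v t k ω
            + sinh (t * G) / G * (expPartialSum v t k ω * v (k + 1) ω)) ∂P := by
          refine integral_mono_ae (integrable_expPartialSum hmeas hbdd (k + 1))
            ((hX.const_mul _).add (hXv.const_mul _)) ?_
          filter_upwards [hbdd k] with ω hω
          rw [expPartialSum_succ]
          have := mul_le_mul_of_nonneg_left (exp_mul_le_cosh_add_sinh_div_mul (t := t) hG hω)
            (expPartialSum_pos (v := v) (t := t) k ω).le
          linarith
      _ = cosh (t * G) * ∫ ω, expPartialSum v t k ω ∂P := by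
          rw [integral_add (hX.const_mul _) (hXv.const_mul _), integral_const_mul,
            integral_const_mul, hzero, mul_zero, add_zero]
      _ ≤ cosh (t * G) ^ (k + 1) := by
          rw [pow_succ']
          exact mul_le_mul_of_nonneg_left ih (cosh_pos _).le

theorem measure_exists_le_sum_le_exp (hmeas : ∀ k, StronglyMeasurable[F (k + 1)] (v (k + 1)))
    (hcond : ∀ k, P[v (k + 1)|F k] =ᵐ[P] 0) (hG : 0 < G) (hbdd : ∀ k, ∀ᵐ ω ∂P, |v (k + 1) ω| ≤ G)
    {T : ℕ} {r τ : ℝ} (hr : 0 ≤ r) (hτ : 0 < τ) (hT : (T : ℝ) ≤ τ) :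
    P {ω | ∃ k ≤ T, r ≤ ∑ j ∈ range k, v (j + 1) ω} ≤
      ENNReal.ofReal (exp (-r ^ 2 / (2 * τ * G ^ 2))) := by
  -- Chernoff's bound with the optimal `t`, for the running maximum by Doob's inequality
  set t := r / (τ * G ^ 2) with ht
  have ht₀ : 0 ≤ t := by positivity
  have hsub : {ω | ∃ k ≤ T, r ≤ ∑ j ∈ range k, v (j + 1) ω} ⊆
      {ω | ∃ k ≤ T, exp (t * r) ≤ expPartialSum v t k ω} := fun ω ⟨k, hk, h⟩ =>
    ⟨k, hk, exp_le_exp.2 (mul_le_mul_of_nonneg_left h ht₀)⟩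
  refine (measure_mono hsub).trans <| ((submartingale_expPartialSum hmeas hcond hbdd)
    |>.measure_exists_le_le_integral_div (fun k ω => (expPartialSum_pos k ω).le) (exp_pos _)
      T).trans (ENNReal.ofReal_le_ofReal ?_)
  calc (∫ ω, expPartialSum v t T ω ∂P) / exp (t * r)
      ≤ cosh (t * G) ^ T / exp (t * r) := by
        gcongr; exact integral_expPartialSum_le hmeas hcond hG hbdd T
    _ ≤ exp ((t * G) ^ 2 / 2) ^ T / exp (t * r) := by gcongr; exact cosh_le_exp_half_sq _
    _ = exp (T * ((t * G) ^ 2 / 2) - t * r) := by rw [← exp_nat_mul, exp_sub]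
    _ ≤ exp (τ * ((t * G) ^ 2 / 2) - t * r) := by gcongr
    _ = exp (-r ^ 2 / (2 * τ * G ^ 2)) := by congr 1; rw [ht]; field_simp; ring

end ExponentialMartingale

lemma condExp_clm_comp_eq_zero {Ω E : Type*} {m mΩ : MeasurableSpace Ω} {P : Measure Ω}
    [NormedAddCommGroup E] [NormedSpace ℝ E] [CompleteSpace E] {X : Ω → E} (ℓ : E →L[ℝ] ℝ)
    (hX : Integrable X P) (h : P[X|m] =ᵐ[P] 0) :
    P[fun ω => ℓ (X ω)|m] =ᵐ[P] 0 := by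
  filter_upwards [ℓ.comp_condExp_comm (m := m) hX, h] with ω h₁ h₂
  change P[ℓ ∘ X|m] ω = 0
  simp [← h₁, h₂]

section VectorMartingale

variable {Ω : Type*} {mΩ : MeasurableSpace Ω} {P : Measure Ω} [IsProbabilityMeasure P]
  {F : Filtration ℕ mΩ} {G r τ : ℝ} {T : ℕ}

theorem measure_exists_le_clm_sum_le_exp {E : Type*} [NormedAddCommGroup E] [NormedSpace ℝ E]
    [CompleteSpace E] {w : ℕ → Ω → E} (hmeas : ∀ k, StronglyMeasurable[F (k + 1)] (w (k + 1)))
    (hcond : ∀ k, P[w (k + 1)|F k] =ᵐ[P] 0) (hG : 0 < G) (hbdd : ∀ k, ∀ᵐ ω ∂P, ‖w (k + 1) ω‖ ≤ G)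
    (ℓ : E →L[ℝ] ℝ) (hℓ : ‖ℓ‖ ≤ 1) (hr : 0 ≤ r) (hτ : 0 < τ) (hT : (T : ℝ) ≤ τ) :
    P {ω | ∃ k ≤ T, r ≤ ℓ (∑ j ∈ range k, w (j + 1) ω)} ≤
      ENNReal.ofReal (exp (-r ^ 2 / (2 * τ * G ^ 2))) := by
  simp_rw [map_sum]
  refine measure_exists_le_sum_le_exp (v := fun k ω => ℓ (w k ω))
    (fun k => ℓ.continuous.comp_stronglyMeasurable (hmeas k))
    (fun k => condExp_clm_comp_eq_zero ℓ
      (.of_bound ((hmeas k).mono (F.le _)).aestronglyMeasurable G (hbdd k)) (hcond k))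
    hG (fun k => (hbdd k).mono fun ω h => ?_) hr hτ hT
  simpa using ℓ.le_of_opNorm_le_of_le hℓ h

theorem measure_exists_le_norm_sum_le_exp {ι : Type*} [Fintype ι] {w : ℕ → Ω → ι → ℝ}
    (hmeas : ∀ k, StronglyMeasurable[F (k + 1)] (w (k + 1)))
    (hcond : ∀ k, P[w (k + 1)|F k] =ᵐ[P] 0) (hG : 0 < G) (hbdd : ∀ k, ∀ᵐ ω ∂P, ‖w (k + 1) ω‖ ≤ G)
    (hr : 0 < r) (hτ : 0 < τ) (hT : (T : ℝ) ≤ τ) :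
    P {ω | ∃ k ≤ T, r ≤ ‖∑ j ∈ range k, w (j + 1) ω‖} ≤
      ENNReal.ofReal (2 * Fintype.card ι * exp (-r ^ 2 / (2 * τ * G ^ 2))) := by
  set b := exp (-r ^ 2 / (2 * τ * G ^ 2))
  set S : ℕ → Ω → ι → ℝ := fun k ω => ∑ j ∈ range k, w (j + 1) ω
  set proj : ι → (ι → ℝ) →L[ℝ] ℝ := ContinuousLinearMap.proj
  have hproj : ∀ i, ‖proj i‖ ≤ 1 := fun i =>
    ContinuousLinearMap.opNorm_le_bound _ zero_le_one fun x => by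
      simpa [proj] using norm_le_pi_norm x i
  have hsub : {ω | ∃ k ≤ T, r ≤ ‖S k ω‖} ⊆
      ⋃ i, ({ω | ∃ k ≤ T, r ≤ proj i (S k ω)} ∪ {ω | ∃ k ≤ T, r ≤ (-proj i) (S k ω)}) := by
    rintro ω ⟨k, hk, h⟩
    obtain ⟨i, hi⟩ : ∃ i, r ≤ |S k ω i| := by
      by_contra! h'
      exact (h.trans_lt ((pi_norm_lt_iff hr).2 h')).false
    simp only [Set.mem_iUnion, Set.mem_union, Set.mem_ofPred_eq]
    rcases le_abs'.1 hi with hneg | hpos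
    · exact ⟨i, .inr ⟨k, hk, by simpa [proj] using le_neg_of_le_neg hneg⟩⟩
    · exact ⟨i, .inl ⟨k, hk, hpos⟩⟩
  calc P {ω | ∃ k ≤ T, r ≤ ‖S k ω‖}
      ≤ ∑ i, (P {ω | ∃ k ≤ T, r ≤ proj i (S k ω)} + P {ω | ∃ k ≤ T, r ≤ (-proj i) (S k ω)}) :=
        (measure_mono hsub).trans <|
          (measure_iUnion_fintype_le _ _).trans (sum_le_sum fun i _ => measure_union_le _ _)
    _ ≤ ∑ _i : ι, (ENNReal.ofReal b + ENNReal.ofReal b) := by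
        gcongr with i
        · exact measure_exists_le_clm_sum_le_exp hmeas hcond hG hbdd _ (hproj i) hr.le hτ hT
        · exact measure_exists_le_clm_sum_le_exp hmeas hcond hG hbdd _
            ((norm_neg _).le.trans (hproj i)) hr.le hτ hT
    _ = ENNReal.ofReal (2 * Fintype.card ι * b) := by
        rw [← ENNReal.ofReal_add (by positivity) (by positivity), sum_const, card_univ,
          nsmul_eq_mul, ← ENNReal.ofReal_natCast, ← ENNReal.ofReal_mul (by positivity)]
        ring_nf

end VectorMartingale

theorem norm_sub_le_of_norm_sum_le {E : Type*} [NormedAddCommGroup E] [NormedSpace ℝ E]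
    {f : E → E} {K : ℝ≥0} (hf : LipschitzWith K f) {h r : ℝ} (hh : 0 ≤ h) {ρ θ w : ℕ → E}
    (h0 : ρ 0 = θ 0) (hρ : ∀ k, ρ (k + 1) = ρ k + h • (f (ρ k) + w (k + 1)))
    (hθ : ∀ k, θ (k + 1) = θ k + h • f (θ k)) {T : ℕ} {c : ℝ} (hT : T * h ≤ c)
    (hw : ∀ k ≤ T, ‖∑ j ∈ range k, w (j + 1)‖ ≤ r) {k : ℕ} (hk : k ≤ T) :
    ‖ρ k - θ k‖ ≤ h * r * exp (K * c) := by
  set e : ℕ → E := fun k => ρ k - θ k - h • ∑ j ∈ range k, w (j + 1)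
  have hdev : ∀ k ≤ T, ‖ρ k - θ k‖ ≤ ‖e k‖ + h * r := fun k hk =>
    calc ‖ρ k - θ k‖ = ‖e k + h • ∑ j ∈ range k, w (j + 1)‖ := by simp [e]
      _ ≤ ‖e k‖ + h * r := by
        refine (norm_add_le _ _).trans ?_
        rw [norm_smul, Real.norm_of_nonneg hh]
        gcongr
        exact hw k hk
  -- discrete Gronwall for `‖e k‖ + h r`, which grows at most by the factor `1 + h K` per step
  have hgron : ∀ k ≤ T, ‖e k‖ + h * r ≤ h * r * (1 + h * K) ^ k := by
    intro k
    induction k with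
    | zero => simp [e, h0]
    | succ k ih =>
      intro hk
      have hstep : e (k + 1) = e k + h • (f (ρ k) - f (θ k)) := by
        simp only [e, hρ, hθ, sum_range_succ]
        module
      have hlip : ‖h • (f (ρ k) - f (θ k))‖ ≤ h * K * (‖e k‖ + h * r) := by
        rw [norm_smul, Real.norm_of_nonneg hh, mul_assoc]
        gcongr
        exact (hf.norm_sub_le _ _).trans (by gcongr; exact hdev k (by omega))
      calc ‖e (k + 1)‖ + h * r ≤ (1 + h * K) * (‖e k‖ + h * r) := by
            rw [hstep]
            linarith [norm_add_le (e k) (h • (f (ρ k) - f (θ k)))]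
        _ ≤ (1 + h * K) * (h * r * (1 + h * K) ^ k) := by gcongr; exact ih (by omega)
        _ = h * r * (1 + h * K) ^ (k + 1) := by ring
  have hr : 0 ≤ r := by simpa using hw 0 (Nat.zero_le T)
  calc ‖ρ k - θ k‖ ≤ h * r * (1 + h * K) ^ k := (hdev k hk).trans (hgron k hk)
    _ ≤ h * r * exp (h * K) ^ k := by
        gcongr
        linarith [add_one_le_exp (h * K)]
    _ = h * r * exp (K * (k * h)) := by rw [← exp_nat_mul]; ring_nf
    _ ≤ h * r * exp (K * c) := by
        gcongr
        exact le_trans (by gcongr) hT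

theorem exists_le_norm_sum_of_le_norm_sub {E : Type*} [NormedAddCommGroup E] [NormedSpace ℝ E]
    {f : E → E} {K : ℝ≥0} (hf : LipschitzWith K f) {h : ℝ} (hh : 0 < h) {ρ θ w : ℕ → E}
    (h0 : ρ 0 = θ 0) (hρ : ∀ k, ρ (k + 1) = ρ k + h • (f (ρ k) + w (k + 1)))
    (hθ : ∀ k, θ (k + 1) = θ k + h • f (θ k)) {T : ℕ} {c : ℝ} (hT : T * h ≤ c) {ε : ℝ}
    (hε : 0 < ε) {k : ℕ} (hk : k ≤ T) (hdev : ε ≤ ‖ρ k - θ k‖) :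
    ∃ j ≤ T, ε * exp (-(K * c)) / (2 * h) ≤ ‖∑ i ∈ range j, w (i + 1)‖ := by
  by_contra! hsmall
  have hgron := norm_sub_le_of_norm_sum_le hf hh.le h0 hρ hθ hT (fun j hj => (hsmall j hj).le) hk
  have hε_half : h * (ε * exp (-(K * c)) / (2 * h)) * exp (K * c) = ε / 2 := by
    rw [exp_neg]
    field_simp
  linarith

lemma stronglyMeasurable_noise {Ω ι : Type*} [Fintype ι] {mΩ : MeasurableSpace Ω}
    {F : Filtration ℕ mΩ} {f : (ι → ℝ) → ι → ℝ} (hf : Continuous f) {h : ℝ} (hh : h ≠ 0)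
    {ρ w : ℕ → Ω → ι → ℝ} (hρ : Adapted F ρ)
    (hrec : ∀ k ω, ρ (k + 1) ω = ρ k ω + h • (f (ρ k ω) + w (k + 1) ω)) (k : ℕ) :
    StronglyMeasurable[F (k + 1)] (w (k + 1)) := by
  have hw : w (k + 1) = fun ω => h⁻¹ • (ρ (k + 1) ω - ρ k ω) - f (ρ k ω) := by
    funext ω
    rw [hrec, add_sub_cancel_left, smul_smul, inv_mul_cancel₀ hh, one_smul, add_sub_cancel_left]
  have hρk : Measurable[F (k + 1)] (ρ k) := (hρ k).mono (F.mono k.le_succ) le_rfl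
  rw [hw]
  exact ((((hρ (k + 1)).sub hρk).const_smul h⁻¹).sub (hf.measurable.comp hρk)).stronglyMeasurable

/-- Mean-field approximation bound (Theorem 2): a stochastic approximation recursion
with step size `1/N`, bounded martingale-difference noise and bounded Lipschitz drift
stays within `ε` of its deterministic mean-field trajectory over horizons `T ≤ c N`,
except on an event of probability at most `C₁ exp(-C₂ ε² N)`, where the constants
`C₁, C₂` depend only on `d, B, L, Γ, c`. -/
theorem meanFieldDynamicsBound
    (d : ℕ) (hd : 1 ≤ d) (B L Γ : ℝ) (c : ℝ) (hc : 0 < c) :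
    ∃ C₁ C₂ : ℝ, 0 < C₁ ∧ 0 < C₂ ∧
      ∀ (Ω : Type) (mΩ : MeasurableSpace Ω) (P : Measure Ω),
        IsProbabilityMeasure P →
      ∀ (F : Filtration ℕ mΩ) (f : (Fin d → ℝ) → (Fin d → ℝ)),
        (∀ x, ‖f x‖ ≤ B) →
        (∀ x z, ‖f x - f z‖ ≤ L * ‖x - z‖) →
      ∀ (N : ℕ), 1 ≤ N →
      ∀ (ρ w : ℕ → Ω → (Fin d → ℝ)) (θ : ℕ → (Fin d → ℝ)),
        Adapted F ρ →
        (∀ k, Measurable (w (k + 1))) →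
        (∀ ω, ρ 0 ω = θ 0) →
        (∀ k ω, ρ (k + 1) ω = ρ k ω + ((N : ℝ))⁻¹ • (f (ρ k ω) + w (k + 1) ω)) →
        (∀ k, P[w (k + 1)|F k] =ᵐ[P] 0) →
        (∀ k, ∀ᵐ ω ∂P, ‖w (k + 1) ω‖ ≤ Γ) →
        (∀ k, θ (k + 1) = θ k + ((N : ℝ))⁻¹ • f (θ k)) →
      ∀ (ε : ℝ), 0 < ε →
      ∀ (T : ℕ), (T : ℝ) ≤ c * N →
        P {ω | ∃ k ≤ T, ε ≤ ‖ρ k ω - θ k‖} ≤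
          ENNReal.ofReal (C₁ * Real.exp (-C₂ * ε ^ 2 * N)) := by
  refine ⟨2 * d, exp (-(2 * |L| * c)) / (8 * c * (|Γ| + 1) ^ 2), by positivity, by positivity, ?_⟩
  intro Ω mΩ P _ F f _ hLip N hN ρ w θ hρ _ h0 hρ_succ hw_cond hw_bdd hθ_succ ε hε T hT
  have hN₀ : (0 : ℝ) < N := by exact_mod_cast hN
  have hf : LipschitzWith (Real.nnabs L) f := .of_dist_le_mul fun x z => by
    simpa [dist_eq_norm] using (hLip x z).trans (by gcongr; exact le_abs_self L)
  have hdev : {ω | ∃ k ≤ T, ε ≤ ‖ρ k ω - θ k‖} ⊆ {ω | ∃ k ≤ T,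
      ε * exp (-(|L| * c)) / (2 * (N : ℝ)⁻¹) ≤ ‖∑ j ∈ range k, w (j + 1) ω‖} :=
    fun ω ⟨k, hk, hεk⟩ => by
      simpa using exists_le_norm_sum_of_le_norm_sub (ρ := (ρ · ω)) (w := (w · ω)) hf
        (by positivity) (h0 ω) (hρ_succ · ω) hθ_succ ((div_le_iff₀ hN₀).2 hT) hε hk hεk
  calc P {ω | ∃ k ≤ T, ε ≤ ‖ρ k ω - θ k‖}
      ≤ ENNReal.ofReal (2 * Fintype.card (Fin d) * exp (-(ε * exp (-(|L| * c)) / (2 * (N : ℝ)⁻¹))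
          ^ 2 / (2 * (c * N) * (|Γ| + 1) ^ 2))) :=
        (measure_mono hdev).trans <| measure_exists_le_norm_sum_le_exp
          (stronglyMeasurable_noise hf.continuous (by positivity) hρ hρ_succ) hw_cond
          (by positivity) (fun k => (hw_bdd k).mono fun _ h => h.trans (by grind [le_abs_self Γ]))
          (by positivity) (by positivity) hT
    _ = _ := by
        congr 2
        · simp
        · congr 1
          rw [show exp (-(2 * |L| * c)) = exp (-(|L| * c)) ^ 2 by rw [← exp_nat_mul]; ring_nf]
          field_simp
          ring
end

section
/- Let A be a strictly upper-triangular 0–1 n×n adjacency matrix of a directed acyclic graph on {1,…,n} (edges (i,j) only for i < j), let T = sgn((I − A)^{-1}) be its transitive closure matrix, let T_{n−1} denote the upper-left (n−1)×(n−1) block of T, and let t_n ∈ ℝ^{n−1} be the vector of the first n−1 entries of the n-th column of T. Let γ_1, …, γ_{n−1} be arbitrary real numbers (log-likelihood contributions of nodes 1,…,n−1), and for each m ∈ {1,…,n−1} define the aggregated log belief l_m = Σ_{j=1}^{n−1} T(j,m) γ_j (the sum of the contributions of all nodes j having a directed path to m, including j = m). Then, with the weight vector w_n = T_{n−1}^{-1}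 t_n (well defined since T_{n−1} is upper triangular with unit diagonal), the incest-free fair-rating aggregate satisfies Σ_{j < n : T(j,n) = 1} γ_j = Σ_{m=1}^{n−1} w_n(m) l_m. -/
/-!
Writing `Tb` for the upper-left block of `T`, the aggregated beliefs are `l = γ ᵥ* Tb`, so
`w ⬝ᵥ l = (Tb *ᵥ w) ⬝ᵥ γ = t ⬝ᵥ γ`, and since `t` is a 0–1 vector this is the sum of `γ` over
the nodes that reach the last one. `Tb` is invertible because `(1 - A)⁻¹` is upper triangular with
unit diagonal (it inverts a unit upper-triangular matrix), hence so are `T` and its block `Tb`.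
-/

open Matrix Finset

/-- The transitive closure matrix `T = sgn((I − A)⁻¹)`, where `sgn` is applied
entrywise, mapping nonzero entries to `1` and zero entries to `0`. -/
noncomputable def transClosure {n : ℕ} (A : Matrix (Fin n) (Fin n) ℝ) :
    Matrix (Fin n) (Fin n) ℝ :=
  Matrix.of fun i j => if (1 - A)⁻¹ i j = 0 then 0 else 1

namespace Matrix

variable {m n R : Type*} [LinearOrder m]

theorem IsUpperTriangular.submatrix_of_strictMono [Zero R] {M : Matrix m m R} [LinearOrder n]
    (hM : M.IsUpperTriangular) {f : n → m} (hf : StrictMono f) :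
    (M.submatrix f f).IsUpperTriangular :=
  fun _ _ hji => hM (hf hji)

section CommRing

variable [CommRing R] [DecidableEq m]

theorem det_eq_one_of_isUpperTriangular [Fintype m] {M : Matrix m m R}
    (hM : M.IsUpperTriangular) (hdiag : ∀ i, M i i = 1) : M.det = 1 := by
  rw [det_of_isUpperTriangular hM]
  exact Finset.prod_eq_one fun i _ => hdiag i

theorem IsUpperTriangular.inv_apply_self_mul_apply_self [Fintype m] {M : Matrix m m R}
    (hM : M.IsUpperTriangular) (hdet : IsUnit M.det) (i : m) : M⁻¹ i i * M i i = 1 := by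
  have : Invertible M := M.invertibleOfIsUnitDet hdet
  have hinv : M⁻¹.IsUpperTriangular := blockTriangular_inv_of_blockTriangular hM
  have hii := congrFun (congrFun (nonsing_inv_mul M hdet) i) i
  rw [mul_apply, one_apply_eq] at hii
  rwa [Finset.sum_eq_single i] at hii
  · intro k _ hki
    rcases lt_or_gt_of_ne hki with hlt | hgt
    · rw [hinv hlt, zero_mul]
    · rw [hM hgt, mul_zero]
  · exact fun hi => absurd (mem_univ i) hi

section OneSub

variable {A : Matrix m m R}

theorem isUpperTriangular_one_sub (hA : ∀ i j, A i j ≠ 0 → i < j) : (1 - A).IsUpperTriangular :=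
  blockTriangular_one.sub fun i j hji => by_contra fun hij => (hA i j hij).asymm hji

theorem one_sub_apply_self (hA : ∀ i j, A i j ≠ 0 → i < j) (i : m) : (1 - A) i i = 1 := by
  have hAii : A i i = 0 := by_contra fun h => lt_irrefl i (hA i i h)
  rw [sub_apply, one_apply_eq, hAii, sub_zero]

variable [Fintype m]

theorem isUnit_det_one_sub (hA : ∀ i j, A i j ≠ 0 → i < j) : IsUnit (1 - A).det :=
  det_eq_one_of_isUpperTriangular (isUpperTriangular_one_sub hA) (one_sub_apply_self hA) ▸
    isUnit_one

theorem isUpperTriangular_one_sub_inv (hA : ∀ i j, A i j ≠ 0 → i < j) :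
    (1 - A)⁻¹.IsUpperTriangular :=
  have : Invertible (1 - A) := (1 - A).invertibleOfIsUnitDet (isUnit_det_one_sub hA)
  blockTriangular_inv_of_blockTriangular (isUpperTriangular_one_sub hA)

theorem one_sub_inv_apply_self (hA : ∀ i j, A i j ≠ 0 → i < j) (i : m) : (1 - A)⁻¹ i i = 1 := by
  simpa [one_sub_apply_self hA] using
    (isUpperTriangular_one_sub hA).inv_apply_self_mul_apply_self (isUnit_det_one_sub hA) i

end OneSub

theorem nonsing_inv_mulVec_dotProduct_vecMul {B : Matrix n n R} [Fintype n] [DecidableEq n]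
    (hB : IsUnit B.det) (t γ : n → R) : B⁻¹ *ᵥ t ⬝ᵥ γ ᵥ* B = t ⬝ᵥ γ := by
  rw [dotProduct_comm, ← dotProduct_mulVec, mulVec_mulVec, mul_nonsing_inv B hB, one_mulVec,
    dotProduct_comm]

end CommRing

end Matrix

theorem sum_filter_eq_one_eq_dotProduct {n R : Type*} [Fintype n] [Semiring R] [DecidableEq R]
    {t : n → R} (ht : ∀ j, t j = 0 ∨ t j = 1) (γ : n → R) :
    ∑ j ∈ univ.filter (fun j => t j = 1), γ j = t ⬝ᵥ γ := by
  rw [sum_filter]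
  refine sum_congr rfl fun j _ => ?_
  split_ifs with h
  · rw [h, one_mul]
  · rw [(ht j).resolve_right h, zero_mul]

section transClosure

variable {n : ℕ} {A : Matrix (Fin n) (Fin n) ℝ}

theorem transClosure_apply_eq_zero_or_one (i j : Fin n) :
    transClosure A i j = 0 ∨ transClosure A i j = 1 := by
  rw [transClosure, of_apply]
  split_ifs <;> simp

theorem isUpperTriangular_transClosure (hA : ∀ i j, A i j ≠ 0 → i < j) :
    (transClosure A).IsUpperTriangular := fun i j hji => by
  simp [transClosure, isUpperTriangular_one_sub_inv hA hji]

theorem transClosure_apply_self (hA : ∀ i j, A i j ≠ 0 → i < j) (i : Fin n) :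
    transClosure A i i = 1 := by
  simp [transClosure, one_sub_inv_apply_self hA i]

end transClosure

theorem fairRatingAlgorithm_general
    (m : ℕ) (A : Matrix (Fin (m + 1)) (Fin (m + 1)) ℝ)
    (hlt : ∀ i j, A i j ≠ 0 → i < j)
    (γ : Fin m → ℝ) :
    let T := transClosure A
    let Tb : Matrix (Fin m) (Fin m) ℝ :=
      Matrix.of fun i j => T (Fin.castSucc i) (Fin.castSucc j)
    let t : Fin m → ℝ := fun i => T (Fin.castSucc i) (Fin.last m)
    let w : Fin m → ℝ := Tb⁻¹ *ᵥ t
    let l : Fin m → ℝ := fun q => ∑ j, T (Fin.castSucc j) (Fin.castSucc q) * γ j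
    (∑ j ∈ Finset.univ.filter
        (fun j : Fin m => T (Fin.castSucc j) (Fin.last m) = 1), γ j) =
      ∑ q, w q * l q := by
  intro T Tb t w l
  have hTb : Tb.det = 1 := det_eq_one_of_isUpperTriangular
    ((isUpperTriangular_transClosure hlt).submatrix_of_strictMono Fin.strictMono_castSucc)
    fun _ => transClosure_apply_self hlt _
  have hl : l = γ ᵥ* Tb := by
    ext q
    simp only [l, vecMul, dotProduct, Tb, of_apply, mul_comm]
  calc ∑ j ∈ univ.filter (fun j => t j = 1), γ j
      = t ⬝ᵥ γ :=
        sum_filter_eq_one_eq_dotProduct (fun _ => transClosure_apply_eq_zero_or_one _ _) γ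
    _ = w ⬝ᵥ l := by rw [hl, nonsing_inv_mulVec_dotProduct_vecMul (hTb ▸ isUnit_one)]

/-- Theorem 4 (Fair Rating Algorithm). The nodes are `{0, …, m}` (so `n = m + 1` nodes,
with node `Fin.last m` the last one). Given the strictly upper-triangular 0–1 adjacency
matrix `A` of the DAG, its transitive closure `T`, the upper-left `m × m` block `Tb` of
`T`, the vector `t` of the first `m` entries of the last column of `T`, the weight vector
`w = Tb⁻¹ t`, arbitrary log-likelihood contributions `γ` of the first `m` nodes, and the
aggregated log beliefs `l q = Σ_j T(j,q) γ_j`, the incest-free fair-rating aggregate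
`Σ_{j : T(j, last) = 1} γ_j` equals `Σ_q w q * l q`. -/
theorem fairRatingAlgorithm
    (m : ℕ) (A : Matrix (Fin (m + 1)) (Fin (m + 1)) ℝ)
    (h01 : ∀ i j, A i j = 0 ∨ A i j = 1)
    (hlt : ∀ i j, A i j ≠ 0 → i < j)
    (γ : Fin m → ℝ) :
    let T := transClosure A
    let Tb : Matrix (Fin m) (Fin m) ℝ :=
      Matrix.of fun i j => T (Fin.castSucc i) (Fin.castSucc j)
    let t : Fin m → ℝ := fun i => T (Fin.castSucc i) (Fin.last m)
    let w : Fin m → ℝ := Tb⁻¹ *ᵥ t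
    let l : Fin m → ℝ := fun q => ∑ j, T (Fin.castSucc j) (Fin.castSucc q) * γ j
    (∑ j ∈ Finset.univ.filter
        (fun j : Fin m => T (Fin.castSucc j) (Fin.last m) = 1), γ j) =
      ∑ q, w q * l q :=
  fairRatingAlgorithm_general m A hlt γ
end

section
/- Let X = {1,…,X} and A = {1,…,A} be finite ordered sets and let c : X × A → ℝ be submodular, i.e., c(i+1, a+1) − c(i+1, a) ≤ c(i, a+1) − c(i, a) for all i, a (decreasing differences in (i,a)). For a pmf μ on X let a*(μ) = min argmin_{a ∈ A} Σ_{i=1}^X c(i,a) μ(i) denote the smallest minimizer of the expected cost. Then a*(μ) is monotone with respect to the MLR order: if μ is MLR-dominated by μ̄ then a*(μ) ≤ a*(μ̄). Consequently, for any X×Y matrix B with strictly positive entries and any fixed y, the recommendation a(π,y) = min argmin_{a ∈ A} Σ_i c(i,a) B_{i,y} π(i) satisfies a(π,y) ≤ a(π̄,y) whenever π is MLR-dominated by π̄. -/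
open Finset

/-- Expected cost `Σ_i c(i,a) μ(i)` of action `a` under the weight vector `μ`. -/
def expCost {X A : ℕ} (c : Fin X → Fin A → ℝ) (μ : Fin X → ℝ) (a : Fin A) : ℝ :=
  ∑ i, c i a * μ i

open scoped Classical in
/-- The smallest minimizer `a*(μ) = min argmin_{a} Σ_i c(i,a) μ(i)`. -/
noncomputable def selAction {X A : ℕ} [NeZero A] (c : Fin X → Fin A → ℝ)
    (μ : Fin X → ℝ) : Fin A :=
  (Finset.univ.filter fun a => ∀ b, expCost c μ a ≤ expCost c μ b).min'
    (by
      obtain ⟨a, -, ha⟩ := Finset.exists_min_image (Finset.univ : Finset (Fin A))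
        (expCost c μ) ⟨default, Finset.mem_univ _⟩
      exact ⟨a, Finset.mem_filter.mpr
        ⟨Finset.mem_univ _, fun b => ha b (Finset.mem_univ b)⟩⟩)

/-- `p` is MLR-dominated by `q`: `p(j) q(i) ≤ p(i) q(j)` for all `i ≤ j`. -/
def MLRLE {X : ℕ} (p q : Fin X → ℝ) : Prop :=
  ∀ i j : Fin X, i ≤ j → p j * q i ≤ p i * q j

/- ----------------- auxiliary lemmas ----------------- -/

/-- MLR implies first order stochastic dominance: lower partial sums are larger. -/
lemma aux_partial_sum_le (X : ℕ) (p q : ℕ → ℝ)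
    (hp : ∀ i, i < X → 0 ≤ p i) (hq : ∀ i, i < X → 0 ≤ q i)
    (hps : ∑ i ∈ range X, p i = 1) (hqs : ∑ i ∈ range X, q i = 1)
    (hmlr : ∀ i j, i ≤ j → j < X → p j * q i ≤ p i * q j)
    (k : ℕ) (hk : k ≤ X) :
    ∑ i ∈ range k, q i ≤ ∑ i ∈ range k, p i := by
  have hsp : ∑ i ∈ range k, p i + ∑ i ∈ Ico k X, p i = 1 := by
    rw [Finset.sum_range_add_sum_Ico p hk]; exact hps
  have hsq : ∑ i ∈ range k, q i + ∑ i ∈ Ico k X, q i = 1 := by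
    rw [Finset.sum_range_add_sum_Ico q hk]; exact hqs
  have key : (∑ i ∈ range k, q i) * (∑ j ∈ Ico k X, p j)
      ≤ (∑ i ∈ range k, p i) * (∑ j ∈ Ico k X, q j) := by
    rw [Finset.sum_mul_sum, Finset.sum_mul_sum]
    apply Finset.sum_le_sum
    intro i hi
    apply Finset.sum_le_sum
    intro j hj
    simp only [Finset.mem_range] at hi
    simp only [Finset.mem_Ico] at hj
    have h := hmlr i j (le_trans (le_of_lt hi) hj.1) hj.2
    calc q i * p j = p j * q i := mul_comm _ _
      _ ≤ p i * q j := h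
  have h1 : ∑ j ∈ Ico k X, p j = 1 - ∑ i ∈ range k, p i := by linarith
  have h2 : ∑ j ∈ Ico k X, q j = 1 - ∑ i ∈ range k, q i := by linarith
  rw [h1, h2] at key
  nlinarith [key]

/-- Expectation of a decreasing function decreases under MLR dominance. -/
lemma aux_exp_le (X : ℕ) (p q f : ℕ → ℝ)
    (hp : ∀ i, i < X → 0 ≤ p i) (hq : ∀ i, i < X → 0 ≤ q i)
    (hps : ∑ i ∈ range X, p i = 1) (hqs : ∑ i ∈ range X, q i = 1)
    (hmlr : ∀ i j, i ≤ j → j < X → p j * q i ≤ p i * q j)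
    (hf : ∀ i, i + 1 < X → f (i + 1) ≤ f i) :
    ∑ i ∈ range X, f i * q i ≤ ∑ i ∈ range X, f i * p i := by
  have hd : 0 ≤ ∑ i ∈ range X, f i * (p i - q i) := by
    have habel := Finset.sum_range_by_parts f (fun i => p i - q i) X
    simp only [smul_eq_mul] at habel
    have hS0 : ∑ i ∈ range X, (p i - q i) = 0 := by
      rw [Finset.sum_sub_distrib, hps, hqs]; ring
    rw [habel, hS0, mul_zero, zero_sub, neg_nonneg]
    apply Finset.sum_nonpos
    intro i hi
    simp only [Finset.mem_range] at hi
    have h1 : i + 1 < X := by omega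
    have hfd : f (i + 1) - f i ≤ 0 := by linarith [hf i h1]
    have hSpos : 0 ≤ ∑ j ∈ range (i + 1), (p j - q j) := by
      rw [Finset.sum_sub_distrib]
      have := aux_partial_sum_le X p q hp hq hps hqs hmlr (i + 1) (by omega)
      linarith
    exact mul_nonpos_of_nonpos_of_nonneg hfd hSpos
  have heq : ∑ i ∈ range X, f i * (p i - q i)
      = (∑ i ∈ range X, f i * p i) - ∑ i ∈ range X, f i * q i := by
    rw [← Finset.sum_sub_distrib]
    apply Finset.sum_congr rfl
    intro i _; ring
  linarith [hd, heq.symm ▸ hd]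

/-- Fin-indexed version of `aux_exp_le`. -/
lemma aux_exp_le_fin (X : ℕ) (μ μ' : Fin X → ℝ) (g : Fin X → ℝ)
    (hμ : ∀ i, 0 ≤ μ i) (hμs : ∑ i, μ i = 1)
    (hμ' : ∀ i, 0 ≤ μ' i) (hμ's : ∑ i, μ' i = 1)
    (hmlr : MLRLE μ μ')
    (hg : ∀ (i j : Fin X), (j : ℕ) = (i : ℕ) + 1 → g j ≤ g i) :
    ∑ i, g i * μ' i ≤ ∑ i, g i * μ i := by
  let p : ℕ → ℝ := fun n => if h : n < X then μ ⟨n, h⟩ else 0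
  let q : ℕ → ℝ := fun n => if h : n < X then μ' ⟨n, h⟩ else 0
  let f : ℕ → ℝ := fun n => if h : n < X then g ⟨n, h⟩ else 0
  have e1 : ∑ i, g i * μ i = ∑ n ∈ range X, f n * p n := by
    rw [← Fin.sum_univ_eq_sum_range (fun n => f n * p n) X]
    apply Finset.sum_congr rfl
    intro i _
    simp [f, p, i.isLt]
  have e2 : ∑ i, g i * μ' i = ∑ n ∈ range X, f n * q n := by
    rw [← Fin.sum_univ_eq_sum_range (fun n => f n * q n) X]
    apply Finset.sum_congr rfl
    intro i _
    simp [f, q, i.isLt]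
  have hps : ∑ n ∈ range X, p n = 1 := by
    rw [← Fin.sum_univ_eq_sum_range p X] at *
    rw [← hμs]
    apply Finset.sum_congr rfl
    intro i _
    simp [p, i.isLt]
  have hqs : ∑ n ∈ range X, q n = 1 := by
    rw [← Fin.sum_univ_eq_sum_range q X] at *
    rw [← hμ's]
    apply Finset.sum_congr rfl
    intro i _
    simp [q, i.isLt]
  rw [e1, e2]
  apply aux_exp_le X p q f _ _ hps hqs
  · intro i j hij hj
    have hi : i < X := lt_of_le_of_lt hij hj
    have := hmlr ⟨i, hi⟩ ⟨j, hj⟩ hij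
    simpa [p, q, hi, hj] using this
  · intro i hi
    have hi' : i < X := by omega
    have := hg ⟨i, hi'⟩ ⟨i + 1, hi⟩ rfl
    simpa [f, hi, hi'] using this
  · intro i hi; simpa [p, hi] using hμ ⟨i, hi⟩
  · intro i hi; simpa [q, hi] using hμ' ⟨i, hi⟩

section main

variable {X A : ℕ} [NeZero A] (c : Fin X → Fin A → ℝ)

lemma aux_step
    (hsub : ∀ (i i' : Fin X) (a a' : Fin A),
      (i' : ℕ) = (i : ℕ) + 1 → (a' : ℕ) = (a : ℕ) + 1 →
      c i' a' - c i' a ≤ c i a' - c i a)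
    (μ μ' : Fin X → ℝ)
    (hμ : ∀ i, 0 ≤ μ i) (hμs : ∑ i, μ i = 1)
    (hμ' : ∀ i, 0 ≤ μ' i) (hμ's : ∑ i, μ' i = 1)
    (hmlr : MLRLE μ μ')
    (a a' : Fin A) (ha : (a' : ℕ) = (a : ℕ) + 1) :
    expCost c μ' a' - expCost c μ' a ≤ expCost c μ a' - expCost c μ a := by
  have key := aux_exp_le_fin X μ μ' (fun i => c i a' - c i a) hμ hμs hμ' hμ's hmlr
    (fun i j hij => hsub i j a a' hij ha)
  have e : ∀ r : Fin X → ℝ, ∑ i, (c i a' - c i a) * r i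
      = (∑ i, c i a' * r i) - ∑ i, c i a * r i := by
    intro r
    rw [← Finset.sum_sub_distrib]
    apply Finset.sum_congr rfl
    intro i _; ring
  rw [e μ, e μ'] at key
  simpa [expCost] using key

lemma aux_diff_mono
    (hsub : ∀ (i i' : Fin X) (a a' : Fin A),
      (i' : ℕ) = (i : ℕ) + 1 → (a' : ℕ) = (a : ℕ) + 1 →
      c i' a' - c i' a ≤ c i a' - c i a)
    (μ μ' : Fin X → ℝ)
    (hμ : ∀ i, 0 ≤ μ i) (hμs : ∑ i, μ i = 1)
    (hμ' : ∀ i, 0 ≤ μ' i) (hμ's : ∑ i, μ' i = 1)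
    (hmlr : MLRLE μ μ') :
    ∀ (n : ℕ) (a b : Fin A), (b : ℕ) = (a : ℕ) + n →
      expCost c μ' b - expCost c μ' a ≤ expCost c μ b - expCost c μ a := by
  intro n
  induction n with
  | zero =>
    intro a b h
    have : b = a := Fin.ext (by omega)
    subst this; simp
  | succ n ih =>
    intro a b h
    have hm : (a : ℕ) + n < A := by
      have := b.isLt; omega
    have h1 := ih a ⟨(a : ℕ) + n, hm⟩ rfl
    have h2 := aux_step c hsub μ μ' hμ hμs hμ' hμ's hmlr ⟨(a : ℕ) + n, hm⟩ b (by simp; omega)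
    linarith

end main

/-- Part 2 of Theorem 6. -/
theorem argmin_MLR_monotone
    (X A Y : ℕ) [NeZero A]
    (c : Fin X → Fin A → ℝ)
    (hsub : ∀ (i i' : Fin X) (a a' : Fin A),
      (i' : ℕ) = (i : ℕ) + 1 → (a' : ℕ) = (a : ℕ) + 1 →
      c i' a' - c i' a ≤ c i a' - c i a) :
    (∀ μ μ' : Fin X → ℝ,
      (∀ i, 0 ≤ μ i) → ∑ i, μ i = 1 →
      (∀ i, 0 ≤ μ' i) → ∑ i, μ' i = 1 →
      MLRLE μ μ' → selAction c μ ≤ selAction c μ') ∧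
    (∀ B : Fin X → Fin Y → ℝ, (∀ i y, 0 < B i y) → ∀ y : Fin Y,
      ∀ π π' : Fin X → ℝ,
      (∀ i, 0 ≤ π i) → ∑ i, π i = 1 →
      (∀ i, 0 ≤ π' i) → ∑ i, π' i = 1 →
      MLRLE π π' →
        selAction c (fun i => B i y * π i) ≤ selAction c (fun i => B i y * π' i)) := by
  classical
  have hmem : ∀ μ : Fin X → ℝ, selAction c μ ∈
      (Finset.univ.filter fun a => ∀ b, expCost c μ a ≤ expCost c μ b) := by
    intro μ
    exact Finset.min'_mem _ _
  have hminOf : ∀ (μ : Fin X → ℝ) (b : Fin A), expCost c μ (selAction c μ) ≤ expCost c μ b := by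
    intro μ b
    have := hmem μ
    rw [Finset.mem_filter] at this
    exact this.2 b
  have hle : ∀ (μ : Fin X → ℝ) (b : Fin A),
      (∀ x, expCost c μ b ≤ expCost c μ x) → selAction c μ ≤ b := by
    intro μ b hb
    exact Finset.min'_le _ b (Finset.mem_filter.mpr ⟨Finset.mem_univ _, hb⟩)
  have part1 : ∀ μ μ' : Fin X → ℝ,
      (∀ i, 0 ≤ μ i) → ∑ i, μ i = 1 →
      (∀ i, 0 ≤ μ' i) → ∑ i, μ' i = 1 →
      MLRLE μ μ' → selAction c μ ≤ selAction c μ' := by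
    intro μ μ' hμ hμs hμ' hμ's hmlr
    by_contra hcon
    push_neg at hcon
    set a := selAction c μ with ha
    set b := selAction c μ' with hb
    have hba : (b : ℕ) ≤ (a : ℕ) := le_of_lt hcon
    have hd := aux_diff_mono c hsub μ μ' hμ hμs hμ' hμ's hmlr ((a : ℕ) - (b : ℕ)) b a (by omega)
    have h1 : expCost c μ a ≤ expCost c μ b := hminOf μ b
    have h2 : expCost c μ' b ≤ expCost c μ' a := hminOf μ' a
    have hEba : expCost c μ b ≤ expCost c μ a := by linarith
    have hbmin : ∀ x, expCost c μ b ≤ expCost c μ x := fun x =>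
      le_trans hEba (hminOf μ x)
    have : a ≤ b := hle μ b hbmin
    exact absurd this (not_le.mpr hcon)
  constructor
  · exact part1
  · intro B hB y π π' hπ hπs hπ' hπ's hmlr
    -- scaling invariance of selAction
    have hscale : ∀ (t : ℝ), 0 < t → ∀ ν : Fin X → ℝ,
        selAction c (fun i => t * ν i) = selAction c ν := by
      intro t ht ν
      have hset : (Finset.univ.filter fun a => ∀ b,
            expCost c (fun i => t * ν i) a ≤ expCost c (fun i => t * ν i) b)
          = (Finset.univ.filter fun a => ∀ b, expCost c ν a ≤ expCost c ν b) := by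
        apply Finset.filter_congr
        intro a _
        have he : ∀ x, expCost c (fun i => t * ν i) x = t * expCost c ν x := by
          intro x
          simp only [expCost, Finset.mul_sum]
          apply Finset.sum_congr rfl
          intro i _; ring
        simp only [he]
        constructor
        · intro h b; exact le_of_mul_le_mul_left (h b) ht
        · intro h b; exact mul_le_mul_of_nonneg_left (h b) (le_of_lt ht)
      unfold selAction
      congr 1
    -- positivity of normalizing constants
    have hpos : ∀ ρ : Fin X → ℝ, (∀ i, 0 ≤ ρ i) → ∑ i, ρ i = 1 →
        0 < ∑ i, B i y * ρ i := by
      intro ρ hρ hρs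
      have hex : ∃ i, 0 < ρ i := by
        by_contra hno
        push_neg at hno
        have : ∑ i, ρ i = 0 := Finset.sum_eq_zero fun i _ =>
          le_antisymm (hno i) (hρ i)
        rw [hρs] at this; norm_num at this
      obtain ⟨i0, hi0⟩ := hex
      apply Finset.sum_pos'
      · intro i _; exact mul_nonneg (le_of_lt (hB i y)) (hρ i)
      · exact ⟨i0, Finset.mem_univ _, mul_pos (hB i0 y) hi0⟩
    have hZ : 0 < ∑ i, B i y * π i := hpos π hπ hπs
    have hZ' : 0 < ∑ i, B i y * π' i := hpos π' hπ' hπ's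
    set Z := ∑ i, B i y * π i with hZdef
    set Z' := ∑ i, B i y * π' i with hZ'def
    set ν : Fin X → ℝ := fun i => Z⁻¹ * (B i y * π i) with hν
    set ν' : Fin X → ℝ := fun i => Z'⁻¹ * (B i y * π' i) with hν'
    have hνnn : ∀ i, 0 ≤ ν i := fun i =>
      mul_nonneg (inv_nonneg.mpr (le_of_lt hZ))
        (mul_nonneg (le_of_lt (hB i y)) (hπ i))
    have hν'nn : ∀ i, 0 ≤ ν' i := fun i =>
      mul_nonneg (inv_nonneg.mpr (le_of_lt hZ'))
        (mul_nonneg (le_of_lt (hB i y)) (hπ' i))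
    have hνs : ∑ i, ν i = 1 := by
      simp only [hν, ← Finset.mul_sum, ← hZdef]
      exact inv_mul_cancel₀ (ne_of_gt hZ)
    have hν's : ∑ i, ν' i = 1 := by
      simp only [hν', ← Finset.mul_sum, ← hZ'def]
      exact inv_mul_cancel₀ (ne_of_gt hZ')
    have hνmlr : MLRLE ν ν' := by
      intro i j hij
      have h := hmlr i j hij
      have hfac : 0 ≤ Z⁻¹ * Z'⁻¹ * (B i y * B j y) :=
        mul_nonneg (mul_nonneg (inv_nonneg.mpr (le_of_lt hZ))
          (inv_nonneg.mpr (le_of_lt hZ')))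
          (mul_nonneg (le_of_lt (hB i y)) (le_of_lt (hB j y)))
      calc ν j * ν' i = (Z⁻¹ * Z'⁻¹ * (B i y * B j y)) * (π j * π' i) := by
            simp only [hν, hν']; ring
        _ ≤ (Z⁻¹ * Z'⁻¹ * (B i y * B j y)) * (π i * π' j) :=
            mul_le_mul_of_nonneg_left h hfac
        _ = ν i * ν' j := by simp only [hν, hν']; ring
    have key := part1 ν ν' hνnn hνs hν'nn hν's hνmlr
    have e1 : selAction c (fun i => B i y * π i) = selAction c ν := by
      rw [← hscale Z⁻¹ (inv_pos.mpr hZ) (fun i => B i y * π i)]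
    have e2 : selAction c (fun i => B i y * π' i) = selAction c ν' := by
      rw [← hscale Z'⁻¹ (inv_pos.mpr hZ') (fun i => B i y * π' i)]
    rw [e1, e2]
    exact key
end

section
/- Let X = {1,…,X}, Y = {1,…,Y}, A = {1,…,A} be finite ordered sets. Assume (A1): the X×Y observation matrix B has strictly positive entries and is TP2, i.e., B_{i+1,y} B_{i,y+1} ≤ B_{i,y} B_{i+1,y+1} for all i, y; and (A2): the cost c : X × A → ℝ is submodular, i.e., c(i+1, a+1) − c(i+1, a) ≤ c(i, a+1) − c(i, a) for all i, a. For a pmf π on X and y ∈ Y define the recommendation a(π,y) = min argmin_{a ∈ A} Σ_{i=1}^X c(i,a) B_{i,y} π(i). Then for every pmf π, the recommendation is monotone increasing in the observation: y ≤ y' implies a(π,y) ≤ a(π,y'). -/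
open Finset

lemma mono_of_adj {X : ℕ} {f : Fin X → ℝ}
    (h : ∀ i i' : Fin X, (i' : ℕ) = (i : ℕ) + 1 → f i ≤ f i') :
    Monotone f := by
  have key : ∀ k : ℕ, ∀ i j : Fin X, (j : ℕ) = (i : ℕ) + k → f i ≤ f j := by
    intro k
    induction k with
    | zero => intro i j hij; have : i = j := Fin.ext (by omega); rw [this]
    | succ n ih =>
        intro i j hij
        have hmlt : (i : ℕ) + n < X := by have := j.isLt; omega
        exact le_trans (ih i ⟨(i : ℕ) + n, hmlt⟩ rfl)
          (h ⟨(i : ℕ) + n, hmlt⟩ j (show (j : ℕ) = (i : ℕ) + n + 1 by omega))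
  intro i j hij
  obtain ⟨k, hk⟩ := Nat.le.dest (Fin.le_def.mp hij)
  exact key k i j hk.symm

/-- MLR-ordered nonneg vectors preserve negativity of antitone-weighted sums. -/
lemma mlr_neg {X : ℕ} (g μ ν : Fin X → ℝ) (hg : Antitone g)
    (hμs : 0 < ∑ i, μ i) (hνs : 0 < ∑ i, ν i)
    (hmlr : ∀ i j : Fin X, i ≤ j → ν i * μ j ≤ μ i * ν j)
    (hneg : ∑ i, g i * μ i < 0) : ∑ i, g i * ν i < 0 := by
  have hS : (0:ℝ) ≤ ∑ i, ∑ j, (g i - g j) * (μ i * ν j - ν i * μ j) := by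
    apply Finset.sum_nonneg; intro i _
    apply Finset.sum_nonneg; intro j _
    rcases le_total i j with hij | hji
    · exact mul_nonneg (sub_nonneg.2 (hg hij)) (sub_nonneg.2 (hmlr i j hij))
    · exact mul_nonneg_of_nonpos_of_nonpos (sub_nonpos.2 (hg hji))
        (sub_nonpos.2 (by linarith [hmlr j i hji]))
  have hid : ∑ i, ∑ j, (g i - g j) * (μ i * ν j - ν i * μ j)
      = 2 * ((∑ i, g i * μ i) * (∑ i, ν i) - (∑ i, g i * ν i) * (∑ i, μ i)) := by
    have expand : ∀ i j : Fin X, (g i - g j) * (μ i * ν j - ν i * μ j)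
        = (g i * μ i) * ν j - (g i * ν i) * μ j - μ i * (g j * ν j) + ν i * (g j * μ j) := by
      intros; ring
    simp_rw [expand, Finset.sum_add_distrib, Finset.sum_sub_distrib,
      ← Finset.mul_sum, ← Finset.sum_mul]
    ring
  have key : (∑ i, g i * ν i) * (∑ i, μ i) ≤ (∑ i, g i * μ i) * (∑ i, ν i) := by linarith [hS, hid.symm ▸ hS]
  nlinarith [mul_neg_of_neg_of_pos hneg hνs]


open scoped Classical in
lemma selAction_isMin {X A : ℕ} [NeZero A] (c : Fin X → Fin A → ℝ) (μ : Fin X → ℝ) :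
    ∀ b, expCost c μ (selAction c μ) ≤ expCost c μ b := by
  have hne : (Finset.univ.filter fun a => ∀ b, expCost c μ a ≤ expCost c μ b).Nonempty := by
    obtain ⟨a, -, ha⟩ := Finset.exists_min_image (Finset.univ : Finset (Fin A))
      (expCost c μ) ⟨default, Finset.mem_univ _⟩
    exact ⟨a, Finset.mem_filter.mpr
      ⟨Finset.mem_univ _, fun b => ha b (Finset.mem_univ b)⟩⟩
  have h := Finset.min'_mem _ hne
  exact fun b => (Finset.mem_filter.mp h).2 b

open scoped Classical in
lemma selAction_le {X A : ℕ} [NeZero A] (c : Fin X → Fin A → ℝ) (μ : Fin X → ℝ)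
    {b : Fin A} (hb : ∀ b', expCost c μ b ≤ expCost c μ b') : selAction c μ ≤ b := by
  unfold selAction
  exact Finset.min'_le _ _ (Finset.mem_filter.mpr ⟨Finset.mem_univ _, hb⟩)

lemma selAction_mono {X A : ℕ} [NeZero A] (c : Fin X → Fin A → ℝ)
    (hsub' : ∀ (i j : Fin X) (a b : Fin A), i ≤ j → a ≤ b →
      c j b - c j a ≤ c i b - c i a)
    (μ ν : Fin X → ℝ)
    (hμs : 0 < ∑ i, μ i) (hνs : 0 < ∑ i, ν i)
    (hmlr : ∀ i j : Fin X, i ≤ j → ν i * μ j ≤ μ i * ν j) :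
    selAction c μ ≤ selAction c ν := by
  by_contra hcon
  push_neg at hcon
  set a := selAction c μ with ha
  set b := selAction c ν with hb
  -- b is not a minimizer for μ, so a is strictly better than b for μ
  have hbnot : ¬ ∀ b', expCost c μ b ≤ expCost c μ b' := by
    intro hall
    exact absurd (selAction_le c μ hall) (not_le.mpr hcon)
  push_neg at hbnot
  obtain ⟨b', hb'⟩ := hbnot
  have hstrict : expCost c μ a < expCost c μ b :=
    lt_of_le_of_lt (selAction_isMin c μ b') hb'
  -- single crossing via mlr_neg
  set g : Fin X → ℝ := fun i => c i a - c i b with hg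
  have hganti : Antitone g := by
    intro i j hij
    exact hsub' i j b a hij (le_of_lt hcon)
  have hsum : ∀ ρ : Fin X → ℝ, ∑ i, g i * ρ i = expCost c ρ a - expCost c ρ b := by
    intro ρ
    simp [expCost, hg, sub_mul, Finset.sum_sub_distrib]
  have hneg : ∑ i, g i * μ i < 0 := by rw [hsum]; linarith
  have hν : ∑ i, g i * ν i < 0 := mlr_neg g μ ν hganti hμs hνs hmlr hneg
  rw [hsum] at hν
  have := selAction_isMin c ν a
  linarith

/-- Part 1 of Theorem 6: under (A1), TP2 strictly positive observation likelihoods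
(`B_{i+1,y} B_{i,y+1} ≤ B_{i,y} B_{i+1,y+1}` for adjacent `i, y`), and (A2), a
submodular cost (`c(i+1,a+1) − c(i+1,a) ≤ c(i,a+1) − c(i,a)` for adjacent `i, a`),
the recommendation `a(π,y) = min argmin_a Σ_i c(i,a) B_{i,y} π(i)` is monotone
increasing in the observation: `y ≤ y'` implies `a(π,y) ≤ a(π,y')`, for every
pmf `π`. -/
theorem recommendation_monotone_in_observation
    (X Y A : ℕ) [NeZero A]
    (B : Fin X → Fin Y → ℝ)
    (hpos : ∀ i y, 0 < B i y)
    (hTP2 : ∀ (i i' : Fin X) (y y' : Fin Y),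
      (i' : ℕ) = (i : ℕ) + 1 → (y' : ℕ) = (y : ℕ) + 1 →
      B i' y * B i y' ≤ B i y * B i' y')
    (c : Fin X → Fin A → ℝ)
    (hsub : ∀ (i i' : Fin X) (a a' : Fin A),
      (i' : ℕ) = (i : ℕ) + 1 → (a' : ℕ) = (a : ℕ) + 1 →
      c i' a' - c i' a ≤ c i a' - c i a)
    (π : Fin X → ℝ) (hπnn : ∀ i, 0 ≤ π i) (hπsum : ∑ i, π i = 1) :
    ∀ y y' : Fin Y, y ≤ y' →
      selAction c (fun i => B i y * π i) ≤ selAction c (fun i => B i y' * π i) := by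
  intro y y' hyy'
  -- positivity of total masses
  have hex : ∃ i, 0 < π i := by
    by_contra hno; push_neg at hno
    have : ∑ i, π i ≤ 0 := Finset.sum_nonpos (fun i _ => hno i)
    linarith
  obtain ⟨i0, hi0⟩ := hex
  have hsum : ∀ z : Fin Y, 0 < ∑ i, B i z * π i := fun z =>
    Finset.sum_pos' (fun i _ => mul_nonneg (hpos i z).le (hπnn i))
      ⟨i0, Finset.mem_univ _, mul_pos (hpos i0 z) hi0⟩
  -- TP2 extends to adjacent observations and arbitrary states i ≤ j
  have adjY : ∀ y₁ y₂ : Fin Y, (y₂ : ℕ) = (y₁ : ℕ) + 1 →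
      ∀ i j : Fin X, i ≤ j → B i y₂ * B j y₁ ≤ B i y₁ * B j y₂ := by
    intro y₁ y₂ hy i j hij
    have hr : Monotone (fun i : Fin X => B i y₂ / B i y₁) := by
      apply mono_of_adj
      intro i i' hi
      rw [div_le_div_iff₀ (hpos i y₁) (hpos i' y₁)]
      nlinarith [hTP2 i i' y₁ y₂ hi hy]
    have hrr := hr hij
    rw [div_le_div_iff₀ (hpos i y₁) (hpos j y₁)] at hrr
    nlinarith [hrr]
  -- TP2 extends to arbitrary y ≤ y' and i ≤ j
  have genY : ∀ i j : Fin X, i ≤ j → B i y' * B j y ≤ B i y * B j y' := by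
    intro i j hij
    have hs : Monotone (fun z : Fin Y => B j z / B i z) := by
      apply mono_of_adj
      intro z z' hz
      rw [div_le_div_iff₀ (hpos i z) (hpos i z')]
      nlinarith [adjY z z' hz i j hij]
    have hss := hs hyy'
    rw [div_le_div_iff₀ (hpos i y) (hpos i y')] at hss
    nlinarith [hss]
  -- submodularity extends to adjacent actions and arbitrary states i ≤ j
  have adjA : ∀ a a' : Fin A, (a' : ℕ) = (a : ℕ) + 1 →
      ∀ i j : Fin X, i ≤ j → c j a' - c j a ≤ c i a' - c i a := by
    intro a a' ha i j hij
    have hm : Monotone (fun i : Fin X => c i a - c i a') := by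
      apply mono_of_adj
      intro i i' hi
      have := hsub i i' a a' hi ha
      linarith
    have := hm hij; simp only at this; linarith
  -- submodularity extends to arbitrary pairs
  have hsub' : ∀ (i j : Fin X) (a b : Fin A), i ≤ j → a ≤ b →
      c j b - c j a ≤ c i b - c i a := by
    intro i j a b hij hab
    have hm : Monotone (fun a : Fin A => c i a - c j a) := by
      apply mono_of_adj
      intro a a' ha
      have := adjA a a' ha i j hij
      linarith
    have := hm hab; simp only at this; linarith
  refine selAction_mono c hsub' _ _ (hsum y) (hsum y') ?_
  intro i j hij
  have h1 := mul_le_mul_of_nonneg_right (genY i j hij) (mul_nonneg (hπnn i) (hπnn j))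
  nlinarith [h1]
end

section
/- Let D = {(p_t, x_t) : t = 1,…,T} be a dataset with p_t ∈ ℝ^m having strictly positive entries and x_t ∈ ℝ^m, and suppose there exist scalars u_t and λ_t > 0 satisfying the Afriat inequalities u_τ − u_t − λ_t p_tᵀ (x_τ − x_t) ≤ 0 for all t, τ ∈ {1,…,T}. Define u(x) = min_{t ∈ {1,…,T}} { u_t + λ_t p_tᵀ (x − x_t) }. Then: (i) u is concave and continuous on ℝ^m; (ii) u is strictly increasing, i.e., if x ≤ z componentwise and x ≠ z then u(x) < u(z) (in particular u is nonsatiated); and (iii) u rationalizes the dataset: for every t and every x ∈ ℝ^m with p_tᵀ x ≤ p_tᵀ x_t, one has u(x) ≤ u(x_t). -/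
open Finset

/-- Afriat's Theorem, implication (2) ⟹ (3) ⟹ (1): if the scalars `u_t` and
`λ_t > 0` satisfy the Afriat inequalities, then the explicitly constructed
piecewise-linear utility `u(x) = min_t { u_t + λ_t p_tᵀ (x − x_t) }` is concave,
continuous, strictly increasing (hence nonsatiated), and rationalizes the
dataset: each observed response `x_t` maximizes `u` over the budget set
`{x : p_tᵀ x ≤ p_tᵀ x_t}`. -/
theorem afriat_constructed_utility_rationalizes
    (m T : ℕ) (hT : 0 < T)
    (p : Fin T → Fin m → ℝ) (hp : ∀ t i, 0 < p t i)
    (x : Fin T → Fin m → ℝ)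
    (u : Fin T → ℝ) (lam : Fin T → ℝ) (hlam : ∀ t, 0 < lam t)
    (hAf : ∀ t τ, u τ - u t - lam t * ∑ i, p t i * (x τ i - x t i) ≤ 0) :
    let U : (Fin m → ℝ) → ℝ := fun z =>
      Finset.univ.inf' ⟨⟨0, hT⟩, Finset.mem_univ _⟩
        (fun t => u t + lam t * ∑ i, p t i * (z i - x t i))
    ConcaveOn ℝ Set.univ U ∧
    Continuous U ∧
    (∀ z z' : Fin m → ℝ, (∀ i, z i ≤ z' i) → z ≠ z' → U z < U z') ∧
    (∀ t, ∀ z : Fin m → ℝ,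
      (∑ i, p t i * z i) ≤ (∑ i, p t i * x t i) → U z ≤ U (x t)) := by
  intro U
  set f : Fin T → (Fin m → ℝ) → ℝ :=
    fun t z => u t + lam t * ∑ i, p t i * (z i - x t i) with hf
  have hU : ∀ z, U z = Finset.univ.inf' ⟨⟨0, hT⟩, Finset.mem_univ _⟩ (fun t => f t z) := by
    intro z; rfl
  have hUle : ∀ z t, U z ≤ f t z := by
    intro z t; rw [hU]; exact Finset.inf'_le _ (Finset.mem_univ t)
  have hleU : ∀ z c, (∀ t, c ≤ f t z) → c ≤ U z := by
    intro z c h; rw [hU]; exact Finset.le_inf' _ _ (fun t _ => h t)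
  refine ⟨?_, ?_, ?_, ?_⟩
  · refine ⟨convex_univ, ?_⟩
    intro z _ z' _ a b ha hb hab
    apply hleU
    intro t
    have haff : f t (a • z + b • z') = a * f t z + b * f t z' := by
      simp only [hf, Pi.add_apply, Pi.smul_apply, smul_eq_mul]
      have : ∀ i, p t i * ((a * z i + b * z' i) - x t i)
          = a * (p t i * (z i - x t i)) + b * (p t i * (z' i - x t i)) := by
        intro i
        have hb' : b = 1 - a := by linarith
        subst hb'; ring
      rw [Finset.sum_congr rfl (fun i _ => this i), Finset.sum_add_distrib,
        ← Finset.mul_sum, ← Finset.mul_sum]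
      have hb' : b = 1 - a := by linarith
      subst hb'; ring
    rw [haff]
    have h1 : U z ≤ f t z := hUle z t
    have h2 : U z' ≤ f t z' := hUle z' t
    have := add_le_add (mul_le_mul_of_nonneg_left h1 ha) (mul_le_mul_of_nonneg_left h2 hb)
    simpa [smul_eq_mul] using this
  · apply Continuous.finset_inf'_apply
    intro t _
    apply Continuous.add continuous_const
    apply Continuous.mul continuous_const
    exact continuous_finset_sum _ fun i _ =>
      (Continuous.mul continuous_const ((continuous_apply i).sub continuous_const))
  · intro z z' hle hne
    obtain ⟨t, _, ht⟩ := Finset.exists_mem_eq_inf' (s := (Finset.univ : Finset (Fin T)))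
      ⟨⟨0, hT⟩, Finset.mem_univ _⟩ (fun t => f t z')
    have hUz' : U z' = f t z' := ht
    have hstrict : f t z < f t z' := by
      have hsum : ∑ i, p t i * (z i - x t i) < ∑ i, p t i * (z' i - x t i) := by
        obtain ⟨j, hj⟩ : ∃ j, z j ≠ z' j := Function.ne_iff.mp hne
        apply Finset.sum_lt_sum
        · intro i _
          exact mul_le_mul_of_nonneg_left (by linarith [hle i]) (hp t i).le
        · exact ⟨j, Finset.mem_univ j, by
            have : z j < z' j := lt_of_le_of_ne (hle j) hj
            have := hp t j; nlinarith⟩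
      simp only [hf]
      have := mul_lt_mul_of_pos_left hsum (hlam t)
      linarith
    calc U z ≤ f t z := hUle z t
      _ < f t z' := hstrict
      _ = U z' := hUz'.symm
  · intro t z hz
    have hUxt : U (x t) = u t := by
      apply le_antisymm
      · have := hUle (x t) t
        simpa [hf] using this
      · apply hleU
        intro τ
        have := hAf τ t
        simp only [hf]; linarith
    rw [hUxt]
    calc U z ≤ f t z := hUle z t
      _ ≤ u t := by
          simp only [hf]
          have hsum : ∑ i, p t i * (z i - x t i) ≤ 0 := by
            have : ∑ i, p t i * (z i - x t i)
                = (∑ i, p t i * z i) - ∑ i, p t i * x t i := by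
              rw [← Finset.sum_sub_distrib]; congr 1; ext i; ring
            rw [this]; linarith
          nlinarith [hlam t]
end

section
/- Let p_1,…,p_T ∈ ℝ^m have strictly positive entries, x_1,…,x_T ∈ ℝ^m, and suppose the scalars u_t and λ_t > 0 satisfy the Afriat inequalities u_τ − u_t − λ_t p_tᵀ (x_τ − x_t) ≤ 0 for all t, τ ∈ {1,…,T}. Then the constructed utility u(x) = min_{τ ∈ {1,…,T}} { u_τ + λ_τ p_τᵀ (x − x_τ) } interpolates the data: u(x_t) = u_t for every t ∈ {1,…,T}. -/
open Finset

/-- Interpolation lemma in the proof of Afriat's Theorem: if the scalars `u_t`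
and `λ_t > 0` satisfy the Afriat inequalities, then the constructed utility
`u(x) = min_τ { u_τ + λ_τ p_τᵀ (x − x_τ) }` interpolates the data:
`u(x_t) = u_t` for every `t`. -/
theorem afriat_constructed_utility_interpolates
    (m T : ℕ) (hT : 0 < T)
    (p : Fin T → Fin m → ℝ) (hp : ∀ t i, 0 < p t i)
    (x : Fin T → Fin m → ℝ)
    (u : Fin T → ℝ) (lam : Fin T → ℝ) (hlam : ∀ t, 0 < lam t)
    (hAf : ∀ t τ, u τ - u t - lam t * ∑ i, p t i * (x τ i - x t i) ≤ 0) :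
    ∀ t : Fin T,
      Finset.univ.inf' ⟨⟨0, hT⟩, Finset.mem_univ _⟩
        (fun τ => u τ + lam τ * ∑ i, p τ i * (x t i - x τ i)) = u t := by
  intro t
  apply le_antisymm
  · have h := Finset.inf'_le
      (fun τ => u τ + lam τ * ∑ i, p τ i * (x t i - x τ i))
      (Finset.mem_univ t)
    simpa using h
  · apply Finset.le_inf'
    intro τ _
    have := hAf τ t
    linarith
end

section
/- Let D = {(p_t, x_t) : t = 1,…,T} be a dataset with p_t ∈ ℝ^m having strictly positive entries and x_t ∈ ℝ^m. If there exist scalars u_t and λ_t > 0 satisfying the Afriat inequalities u_τ − u_t − λ_t p_tᵀ (x_τ − x_t) ≤ 0 for all t, τ ∈ {1,…,T}, then D satisfies the Generalized Axiom of Revealed Preference (GARP): for every finite sequence of indices t_1,…,t_k from {1,…,T} such that p_{t_j}ᵀ x_{t_j} ≥ p_{t_j}ᵀ x_{t_{j+1}} for all j = 1,…,k−1, it holds that p_{t_k}ᵀ x_{t_k} ≤ p_{t_k}ᵀ x_{t_1}. -/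
open Finset

/-- The Generalized Axiom of Revealed Preference (GARP) for the dataset
`D = {(p_t, x_t)}`: for every finite sequence of indices `t_1, …, t_k` with
`p_{t_j}ᵀ x_{t_j} ≥ p_{t_j}ᵀ x_{t_{j+1}}` for all `j = 1, …, k−1`, it holds that
`p_{t_k}ᵀ x_{t_k} ≤ p_{t_k}ᵀ x_{t_1}`. -/
def GARP (m T : ℕ) (p x : Fin T → Fin m → ℝ) : Prop :=
  ∀ (k : ℕ) (ts : Fin (k + 1) → Fin T),
    (∀ j : Fin k,
      ∑ i, p (ts j.castSucc) i * x (ts j.succ) i ≤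
        ∑ i, p (ts j.castSucc) i * x (ts j.castSucc) i) →
    ∑ i, p (ts (Fin.last k)) i * x (ts (Fin.last k)) i ≤
      ∑ i, p (ts (Fin.last k)) i * x (ts 0) i

/-- Afriat's Theorem, implication (2) ⟹ (4): feasibility of the Afriat
inequalities with `λ_t > 0` implies the dataset satisfies GARP. -/
theorem afriat_inequalities_imply_GARP
    (m T : ℕ)
    (p : Fin T → Fin m → ℝ) (hp : ∀ t i, 0 < p t i)
    (x : Fin T → Fin m → ℝ)
    (u : Fin T → ℝ) (lam : Fin T → ℝ) (hlam : ∀ t, 0 < lam t)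
    (hAf : ∀ t τ, u τ - u t - lam t * ∑ i, p t i * (x τ i - x t i) ≤ 0) :
    GARP m T p x := by
  have hdiff : ∀ t τ : Fin T, ∑ i, p t i * (x τ i - x t i)
      = (∑ i, p t i * x τ i) - ∑ i, p t i * x t i := by
    intro t τ
    rw [← Finset.sum_sub_distrib]
    exact Finset.sum_congr rfl fun i _ => by ring
  have key : ∀ t τ : Fin T, (∑ i, p t i * x τ i ≤ ∑ i, p t i * x t i) → u τ ≤ u t := by
    intro t τ hle
    have h1 := hAf t τ
    rw [hdiff] at h1
    nlinarith [hlam t]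
  have keys : ∀ t τ : Fin T, (∑ i, p t i * x τ i < ∑ i, p t i * x t i) → u τ < u t := by
    intro t τ hlt
    have h1 := hAf t τ
    rw [hdiff] at h1
    nlinarith [hlam t]
  intro k ts hchain
  by_contra hcon
  push_neg at hcon
  have hlast : u (ts 0) < u (ts (Fin.last k)) := keys _ _ hcon
  have mono : ∀ j : Fin (k + 1), u (ts j) ≤ u (ts 0) := by
    intro j
    induction j using Fin.induction with
    | zero => exact le_rfl
    | succ j ih => exact le_trans (key _ _ (hchain j)) ih
  exact absurd (mono (Fin.last k)) (not_le.mpr hlast)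
end

section
/- Let D = {(p_t, x_t) : t = 1,…,T} be a dataset with p_t ∈ ℝ^m having strictly positive entries and x_t ∈ ℝ^m. If D satisfies the Generalized Axiom of Revealed Preference (GARP) — for every finite sequence of indices t_1,…,t_k from {1,…,T} such that p_{t_j}ᵀ x_{t_j} ≥ p_{t_j}ᵀ x_{t_{j+1}} for all j = 1,…,k−1, it holds that p_{t_k}ᵀ x_{t_k} ≤ p_{t_k}ᵀ x_{t_1} — then there exist scalars u_t and λ_t > 0, t = 1,…,T, satisfying the Afriat inequalities u_τ − u_t − λ_t p_tᵀ (x_τ − x_t) ≤ 0 for all t, τ ∈ {1,…,T}. Consequently D is rationalized by a continuous, concave, strictly increasing utility function. -/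
/-!
Put `A t s = p_t ⬝ (x_s - x_t)`. GARP says exactly that whenever `t` is reached from `s` by a
chain of steps with `A ≤ 0`, the closing cost `A t s` is nonnegative (cyclical consistency).
Afriat numbers `u, λ` are then built by induction on the index set: a terminal strongly connected
class `I` of the relation `A ≤ 0` has all internal costs `≥ 0` and all costs towards the rest
`> 0`, so after solving on the rest one gives `I` a constant utility below every constraint
pointing into `I` and multipliers large enough to dominate the constraints leaving `I`.
The utility is the lower envelope `z ↦ min_t (u_t + λ_t p_t ⬝ (z - x_t))`: concave and continuous
as a minimum of affine maps, strictly increasing since `p_t, λ_t > 0`, and equal to `u_t` at `x_t`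
by the Afriat inequalities.
-/

open Finset

open Relation

theorem Finset.exists_terminal_class {α : Type*} (r : α → α → Prop) {S : Finset α}
    (hS : S.Nonempty) :
    ∃ I ⊆ S, I.Nonempty ∧ (∀ t ∈ I, ∀ s ∈ S, r t s → s ∈ I) ∧
      ∀ t ∈ I, ∀ s ∈ I, ReflTransGen r t s := by
  classical
  -- a vertex whose reachable part of `S` is smallest is reached back from everything it reaches
  let reach (t : α) : Finset α := S.filter (ReflTransGen r t)
  obtain ⟨t₀, ht₀, hmin⟩ := S.exists_min_image (fun t => #(reach t)) hS
  have reach_eq : ∀ s ∈ reach t₀, reach s = reach t₀ := fun s hs =>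
    eq_of_subset_of_card_le
      (fun v hv => mem_filter.2 ⟨(mem_filter.1 hv).1, (mem_filter.1 hs).2.trans (mem_filter.1 hv).2⟩)
      (hmin s (mem_filter.1 hs).1)
  refine ⟨reach t₀, filter_subset _ _, ⟨t₀, mem_filter.2 ⟨ht₀, .refl⟩⟩, ?_, ?_⟩
  · intro t ht s hs hts
    exact mem_filter.2 ⟨hs, (mem_filter.1 ht).2.tail hts⟩
  · intro t ht s hs
    rw [← reach_eq t ht] at hs
    exact (mem_filter.1 hs).2

theorem RelSeries.exists_head_last_of_reflTransGen {α : Type*} {r : SetRel α α} {a b : α}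
    (h : ReflTransGen (fun a b => (a, b) ∈ r) a b) : ∃ q : RelSeries r, q.head = a ∧ q.last = b := by
  induction h with
  | refl => exact ⟨RelSeries.singleton r a, rfl, rfl⟩
  | tail _ hbc ih =>
    obtain ⟨q, rfl, rfl⟩ := ih
    exact ⟨q.snoc _ hbc, q.head_snoc _ hbc, q.last_snoc _ hbc⟩

section Afriat

variable {ι 𝕜 : Type*} [Field 𝕜] [LinearOrder 𝕜] [IsStrictOrderedRing 𝕜]

def CyclicallyConsistent (A : ι → ι → 𝕜) : Prop :=
  ∀ t s, ReflTransGen (fun a b => A a b ≤ 0) s t → 0 ≤ A t s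

def IsAfriatSolutionOn (A : ι → ι → 𝕜) (S : Finset ι) (u lam : ι → 𝕜) : Prop :=
  (∀ t ∈ S, 0 < lam t) ∧ ∀ t ∈ S, ∀ τ ∈ S, u τ ≤ u t + lam t * A t τ

theorem Finset.exists_pos_forall_le_mul (s : Finset ι) (b a : ι → 𝕜) (ha : ∀ i ∈ s, 0 < a i) :
    ∃ L, 0 < L ∧ ∀ i ∈ s, b i ≤ L * a i := by
  classical
  obtain ⟨M, hM⟩ := (s.image fun i => b i / a i).bddAbove
  refine ⟨max M 1, by positivity, fun i hi => ?_⟩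
  have hMi : b i / a i ≤ max M 1 := (hM (mem_coe.2 (mem_image_of_mem _ hi))).trans (le_max_left _ _)
  calc b i = b i / a i * a i := (div_mul_cancel₀ _ (ha i hi).ne').symm
    _ ≤ max M 1 * a i := mul_le_mul_of_nonneg_right hMi (ha i hi).le

variable {A : ι → ι → 𝕜}

theorem IsAfriatSolutionOn.extend [DecidableEq ι] {I S : Finset ι} {u lam : ι → 𝕜}
    (h : IsAfriatSolutionOn A (S \ I) u lam)
    (hII : ∀ t ∈ I, ∀ s ∈ I, 0 ≤ A t s) (hIJ : ∀ t ∈ I, ∀ s ∈ S \ I, 0 < A t s) :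
    ∃ u' lam', IsAfriatSolutionOn A S u' lam' := by
  obtain ⟨c, hc⟩ := (((S \ I) ×ˢ I).image fun q => u q.1 + lam q.1 * A q.1 q.2).bddBelow
  have hc' : ∀ t ∈ S \ I, ∀ τ ∈ I, c ≤ u t + lam t * A t τ := fun t ht τ hτ =>
    hc (mem_image.2 ⟨(t, τ), mem_product.2 ⟨ht, hτ⟩, rfl⟩)
  choose! L hL using fun t (ht : t ∈ I) =>
    (S \ I).exists_pos_forall_le_mul (u · - c) (A t) (hIJ t ht)
  refine ⟨fun t => if t ∈ I then c else u t, fun t => if t ∈ I then L t else lam t, ?_, ?_⟩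
  · intro t ht
    dsimp only
    split_ifs with htI
    exacts [(hL t htI).1, h.1 t (mem_sdiff.2 ⟨ht, htI⟩)]
  · intro t ht τ hτ
    by_cases htI : t ∈ I <;> by_cases hτI : τ ∈ I <;> simp only [htI, hτI, if_true, if_false]
    · exact le_add_of_nonneg_right (mul_nonneg (hL t htI).1.le (hII t htI τ hτI))
    · exact sub_le_iff_le_add'.1 ((hL t htI).2 τ (mem_sdiff.2 ⟨hτ, hτI⟩))
    · exact hc' t (mem_sdiff.2 ⟨ht, htI⟩) τ hτI
    · exact h.2 t (mem_sdiff.2 ⟨ht, htI⟩) τ (mem_sdiff.2 ⟨hτ, hτI⟩)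

theorem CyclicallyConsistent.exists_isAfriatSolutionOn (hA : CyclicallyConsistent A)
    (S : Finset ι) : ∃ u lam, IsAfriatSolutionOn A S u lam := by
  classical
  induction S using Finset.strongInduction with
  | H S ih =>
  rcases S.eq_empty_or_nonempty with rfl | hS
  · exact ⟨0, 0, by simp [IsAfriatSolutionOn]⟩
  obtain ⟨I, hIS, hI, hclosed, hreach⟩ := S.exists_terminal_class (fun a b => A a b ≤ 0) hS
  obtain ⟨u, lam, h⟩ := ih (S \ I) (sdiff_ssubset hIS hI)
  refine h.extend (fun t ht s hs => hA t s (hreach s hs t ht)) fun t ht s hs => ?_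
  by_contra! hts
  exact (mem_sdiff.1 hs).2 (hclosed t ht s (mem_sdiff.1 hs).1 hts)

end Afriat

theorem GARP.cyclicallyConsistent {m T : ℕ} {p x : Fin T → Fin m → ℝ} (h : GARP m T p x) :
    CyclicallyConsistent fun t s => p t ⬝ᵥ (x s - x t) := by
  intro t s hst
  obtain ⟨q, rfl, rfl⟩ := RelSeries.exists_head_last_of_reflTransGen
    (r := {ab | p ab.1 ⬝ᵥ (x ab.2 - x ab.1) ≤ 0}) hst
  have := h q.length q fun j => by
    have step : p (q j.castSucc) ⬝ᵥ (x (q j.succ) - x (q j.castSucc)) ≤ 0 := q.step j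
    rwa [dotProduct_sub, sub_nonpos] at step
  show 0 ≤ p q.last ⬝ᵥ (x q.head - x q.last)
  rwa [dotProduct_sub, sub_nonneg]

theorem StrictMono.inf {α β : Type*} [Preorder α] [LinearOrder β] {f g : α → β}
    (hf : StrictMono f) (hg : StrictMono g) : StrictMono (f ⊓ g) := fun _ _ hab =>
  lt_inf_iff.2 ⟨inf_le_left.trans_lt (hf hab), inf_le_right.trans_lt (hg hab)⟩

theorem strictMono_dotProduct {κ R : Type*} [Fintype κ] [CommRing R] [PartialOrder R]
    [IsStrictOrderedRing R] {w : κ → R} (hw : ∀ i, 0 < w i) : StrictMono (w ⬝ᵥ ·) := by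
  intro z z' hzz'
  obtain ⟨hle, i, hi⟩ := Pi.lt_def.1 hzz'
  exact sum_lt_sum (fun j _ => mul_le_mul_of_nonneg_left (hle j) (hw j).le)
    ⟨i, mem_univ i, mul_lt_mul_of_pos_left hi (hw i)⟩

section Utility

variable {ι κ : Type*} [Fintype ι] [Nonempty ι] [Fintype κ]

def afriatUtility (p x : ι → κ → ℝ) (u lam : ι → ℝ) : (κ → ℝ) → ℝ :=
  univ.inf' univ_nonempty fun t z => u t + lam t * p t ⬝ᵥ (z - x t)

variable {p x : ι → κ → ℝ} {u lam : ι → ℝ}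

theorem continuous_afriatUtility : Continuous (afriatUtility p x u lam) :=
  Continuous.finset_inf' _ fun t _ => by fun_prop

theorem concaveOn_afriatUtility : ConcaveOn ℝ Set.univ (afriatUtility p x u lam) := by
  refine inf'_induction _ _ (fun _ h₁ _ h₂ => h₁.inf h₂) fun t _ => ?_
  refine ((concaveOn_const (u t - lam t * p t ⬝ᵥ x t) convex_univ).add
    ((lam t • dotProductBilin ℝ ℝ (p t)).concaveOn convex_univ)).congr fun z _ => ?_
  simp only [LinearMap.coe_smul, Pi.add_apply, Pi.smul_apply, dotProductBilin_apply_apply,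
    smul_eq_mul, dotProduct_sub]
  ring

theorem strictMono_afriatUtility (hp : ∀ t i, 0 < p t i) (hlam : ∀ t, 0 < lam t) :
    StrictMono (afriatUtility p x u lam) :=
  inf'_induction _ _ (fun _ h₁ _ h₂ => h₁.inf h₂) fun t _ _ _ hzz' =>
    add_lt_add_right (mul_lt_mul_of_pos_left
      (strictMono_dotProduct (hp t) (sub_lt_sub_right hzz' (x t))) (hlam t)) (u t)

theorem afriatUtility_le (t : ι) (z : κ → ℝ) :
    afriatUtility p x u lam z ≤ u t + lam t * p t ⬝ᵥ (z - x t) := by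
  rw [afriatUtility, Finset.inf'_apply]
  exact inf'_le _ (mem_univ t)

theorem afriatUtility_apply_self (h : IsAfriatSolutionOn (fun t s => p t ⬝ᵥ (x s - x t)) univ u lam)
    (t : ι) : afriatUtility p x u lam (x t) = u t := by
  refine le_antisymm ((afriatUtility_le t (x t)).trans_eq (by simp)) ?_
  rw [afriatUtility, Finset.inf'_apply]
  exact le_inf' _ _ fun s _ => h.2 s (mem_univ s) t (mem_univ t)

theorem afriatUtility_le_of_dotProduct_le
    (h : IsAfriatSolutionOn (fun t s => p t ⬝ᵥ (x s - x t)) univ u lam) {t : ι} {z : κ → ℝ}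
    (hz : p t ⬝ᵥ z ≤ p t ⬝ᵥ x t) : afriatUtility p x u lam z ≤ afriatUtility p x u lam (x t) := by
  rw [afriatUtility_apply_self h]
  refine (afriatUtility_le t z).trans (add_le_of_nonpos_right ?_)
  exact mul_nonpos_of_nonneg_of_nonpos (h.1 t (mem_univ t)).le
    (by rwa [dotProduct_sub, sub_nonpos])

end Utility

/-- Afriat's Theorem, implication (4) ⟹ (2): if the dataset satisfies GARP, then
the Afriat inequalities have a feasible solution with `λ_t > 0`; consequently the
dataset is rationalized by a continuous, concave, strictly increasing utility. -/
theorem GARP_implies_afriat_inequalities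
    (m T : ℕ)
    (p : Fin T → Fin m → ℝ) (hp : ∀ t i, 0 < p t i)
    (x : Fin T → Fin m → ℝ)
    (hgarp : GARP m T p x) :
    (∃ (u : Fin T → ℝ) (lam : Fin T → ℝ),
      (∀ t, 0 < lam t) ∧
      (∀ t τ, u τ - u t - lam t * ∑ i, p t i * (x τ i - x t i) ≤ 0)) ∧
    (∃ U : (Fin m → ℝ) → ℝ,
      Continuous U ∧
      ConcaveOn ℝ Set.univ U ∧
      (∀ z z' : Fin m → ℝ, (∀ i, z i ≤ z' i) → z ≠ z' → U z < U z') ∧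
      (∀ t, ∀ z : Fin m → ℝ,
        (∑ i, p t i * z i) ≤ (∑ i, p t i * x t i) → U z ≤ U (x t))) := by
  obtain ⟨u, lam, hsol⟩ := hgarp.cyclicallyConsistent.exists_isAfriatSolutionOn univ
  have hlam t : 0 < lam t := hsol.1 t (mem_univ t)
  refine ⟨⟨u, lam, hlam, fun t τ =>
    sub_nonpos.2 (sub_le_iff_le_add'.2 (hsol.2 t (mem_univ t) τ (mem_univ τ)))⟩, ?_⟩
  rcases isEmpty_or_nonempty (Fin T) with hT | hT
  · exact ⟨(1 ⬝ᵥ ·), by fun_prop, (dotProductBilin ℝ ℝ 1).concaveOn convex_univ,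
      fun z z' hle hne => strictMono_dotProduct (fun _ => one_pos) (lt_of_le_of_ne hle hne),
      isEmptyElim⟩
  · exact ⟨afriatUtility p x u lam, continuous_afriatUtility, concaveOn_afriatUtility,
      fun z z' hle hne => strictMono_afriatUtility hp hlam (lt_of_le_of_ne hle hne),
      fun t z hz => afriatUtility_le_of_dotProduct_le hsol hz⟩
end

section
/- Let D = {(p_t, x_t^1,…,x_t^n) : t = 1,…,T} be a multi-agent dataset with p_t ∈ ℝ^m having strictly positive entries and x_t^i ∈ ℝ^m for each agent i ∈ {1,…,n}. Suppose V : (ℝ^m)^n → ℝ is concave and differentiable, each block gradient ∇_{x^i} V is strictly positive (every partial derivative strictly positive) at every point, and for each t the joint response (x_t^1,…,x_t^n) maximizes V over the joint budget set {(x^1,…,x^n) : p_tᵀ x^i ≤ p_tᵀ x_t^i for all i = 1,…,n}. Then, setting v_t := V(x_t^1,…,x_t^n), there exist scalars λ_t^i > 0 with ∇_{x^i} V(x_t^1,…,x_t^n) = λ_t^i p_t for all i and t, and the multi-agent Afriat inequalities v_τ − v_t − Σ_{i=1}^n λ_t^i p_tᵀ (x_τ^i − x_t^i) ≤ 0 hold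 for all t, τ ∈ {1,…,T}. -/
/-!
At the observed joint response, moving inside one agent's block along a direction that leaves
that agent's expenditure unchanged keeps every budget satisfied, in both directions along the
line, so the potential has a maximum there along that line and its directional derivative
vanishes. A linear functional vanishing on the kernel of `v ↦ p ⬝ᵥ v` is a multiple of it, which
gives the blockwise KKT conditions `∇_{x^i} V(x_t) = λ_t^i p_t`, with `λ_t^i > 0` because the
gradient is positive. The Afriat inequalities are then the first-order characterization of
concavity, `V y - V x ≤ DV(x)(y - x)`, expanded block by block.
-/

open Finset

section LineDerivative

variable {E : Type*} [NormedAddCommGroup E] [NormedSpace ℝ E] {f : E → ℝ} {x : E}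

theorem DifferentiableAt.hasDerivAt_comp_add_smul (hf : DifferentiableAt ℝ f x) (d : E) :
    HasDerivAt (fun s : ℝ => f (x + s • d)) (fderiv ℝ f x d) 0 := by
  have hline : HasDerivAt (fun s : ℝ => x + s • d) d 0 := by
    simpa using ((hasDerivAt_id (0 : ℝ)).smul_const d).const_add x
  have hf' : HasFDerivAt f (fderiv ℝ f x) (x + (0 : ℝ) • d) := by simpa using hf.hasFDerivAt
  exact hf'.comp_hasDerivAt 0 hline

theorem fderiv_apply_eq_zero_of_forall_add_smul_le (hf : DifferentiableAt ℝ f x) {d : E}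
    (hmax : ∀ s : ℝ, f (x + s • d) ≤ f x) : fderiv ℝ f x d = 0 := by
  have hloc : IsLocalMax (fun s : ℝ => f (x + s • d)) 0 :=
    Filter.Eventually.of_forall fun s => by simpa using hmax s
  exact hloc.hasDerivAt_eq_zero (hf.hasDerivAt_comp_add_smul d)

theorem ConcaveOn.sub_le_fderiv_sub (hconc : ConcaveOn ℝ Set.univ f)
    (hf : DifferentiableAt ℝ f x) (y : E) : f y - f x ≤ fderiv ℝ f x (y - x) := by
  have hline : ConcaveOn ℝ Set.univ (fun s : ℝ => f (x + s • (y - x))) := by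
    have hcomp : (fun s : ℝ => f (x + s • (y - x))) = f ∘ AffineMap.lineMap x y := by
      ext s
      simp [AffineMap.lineMap_apply_module', add_comm]
    simpa [hcomp] using hconc.comp_affineMap (AffineMap.lineMap x y)
  simpa [slope_def_field] using hline.slope_le_of_hasDerivAt (Set.mem_univ 0)
    (Set.mem_univ 1) one_pos (hf.hasDerivAt_comp_add_smul (y - x))

end LineDerivative

theorem LinearMap.exists_pos_eq_mul_sum_of_ker {ι : Type*} [Fintype ι] [DecidableEq ι]
    (p : ι → ℝ) (hp : ∀ j, 0 < p j) (L : (ι → ℝ) →ₗ[ℝ] ℝ)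
    (hL : ∀ j, 0 < L (Pi.single j 1))
    (hker : ∀ v, ∑ j, p j * v j = 0 → L v = 0) :
    ∃ c, 0 < c ∧ ∀ v, L v = c * ∑ j, p j * v j := by
  rcases isEmpty_or_nonempty ι with hι | ⟨⟨j₀⟩⟩
  · exact ⟨1, one_pos, fun v => by simp [Subsingleton.elim v 0]⟩
  refine ⟨L (Pi.single j₀ 1) / p j₀, div_pos (hL j₀) (hp j₀), fun v => ?_⟩
  set a := (∑ j, p j * v j) / p j₀
  have hneutral : ∑ j, p j * (v - a • Pi.single j₀ 1 : ι → ℝ) j = 0 := by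
    simp [mul_sub, sum_sub_distrib, Pi.single_apply, a, mul_div_cancel₀ _ (hp j₀).ne']
  have h := hker _ hneutral
  rw [map_sub, map_smul, smul_eq_mul, sub_eq_zero] at h
  rw [h, mul_comm, div_mul_eq_mul_div, mul_div_assoc]

/-- Multiagent Afriat Theorem, implication (1) ⟹ (2): if the multi-agent dataset
`D = {(p_t, x_t^1, …, x_t^n)}` is generated by joint maximization of a concave
differentiable potential `V` with strictly positive block gradients over the joint
budget sets `{(x^1,…,x^n) : p_tᵀ x^i ≤ p_tᵀ x_t^i for all i}`, then there exist
multipliers `λ_t^i > 0` with `∇_{x^i} V(x_t) = λ_t^i p_t`, and the multi-agent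
Afriat inequalities
`V(x_τ) − V(x_t) − Σ_i λ_t^i p_tᵀ (x_τ^i − x_t^i) ≤ 0` hold for all `t, τ`. -/
theorem multiagent_afriat_nash_implies_inequalities
    (m n T : ℕ)
    (p : Fin T → Fin m → ℝ) (hp : ∀ t j, 0 < p t j)
    (x : Fin T → Fin n → Fin m → ℝ)
    (V : (Fin n → Fin m → ℝ) → ℝ)
    (hconc : ConcaveOn ℝ Set.univ V)
    (hdiff : Differentiable ℝ V)
    (hgrad : ∀ (z : Fin n → Fin m → ℝ) (i : Fin n) (j : Fin m),
      0 < fderiv ℝ V z (Pi.single i (Pi.single j 1)))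
    (hmax : ∀ t, ∀ y : Fin n → Fin m → ℝ,
      (∀ i, (∑ j, p t j * y i j) ≤ (∑ j, p t j * x t i j)) → V y ≤ V (x t)) :
    ∃ lam : Fin T → Fin n → ℝ,
      (∀ t i, 0 < lam t i) ∧
      (∀ t i j, fderiv ℝ V (x t) (Pi.single i (Pi.single j 1)) = lam t i * p t j) ∧
      (∀ t τ,
        V (x τ) - V (x t) - ∑ i, lam t i * ∑ j, p t j * (x τ i j - x t i j) ≤ 0) := by
  have hblock : ∀ t i, ∃ c, 0 < c ∧
      ∀ v, fderiv ℝ V (x t) (Pi.single i v) = c * ∑ j, p t j * v j := by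
    intro t i
    refine LinearMap.exists_pos_eq_mul_sum_of_ker (p t) (hp t)
      ((fderiv ℝ V (x t) : (Fin n → Fin m → ℝ) →ₗ[ℝ] ℝ) ∘ₗ
        LinearMap.single ℝ (fun _ => Fin m → ℝ) i) (hgrad (x t) i) fun v hv => ?_
    refine fderiv_apply_eq_zero_of_forall_add_smul_le (hdiff _) fun s => hmax t _ fun i' => ?_
    rcases eq_or_ne i' i with rfl | hi'
    · simp [mul_add, sum_add_distrib, mul_left_comm _ s, ← mul_sum, hv]
    · simp [hi']
  choose lam hlam_pos hlam using hblock
  refine ⟨lam, hlam_pos, fun t i j => ?_, fun t τ => ?_⟩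
  · simpa [Pi.single_apply] using hlam t i (Pi.single j 1)
  rw [sub_nonpos]
  calc V (x τ) - V (x t) ≤ fderiv ℝ V (x t) (x τ - x t) := hconc.sub_le_fderiv_sub (hdiff _) _
    _ = ∑ i, fderiv ℝ V (x t) (Pi.single i ((x τ - x t) i)) := by
      rw [← map_sum, univ_sum_single]
    _ = ∑ i, lam t i * ∑ j, p t j * (x τ i j - x t i j) := by simp [hlam]
end

section
/- Let D = {(p_t, x_t^1,…,x_t^n) : t = 1,…,T} be a multi-agent dataset with p_t ∈ ℝ^m having strictly positive entries and x_t^i ∈ ℝ^m for each agent i ∈ {1,…,n}, and suppose there exist scalars v_t and λ_t^i > 0 satisfying v_τ − v_t − Σ_{i=1}^n λ_t^i p_tᵀ (x_τ^i − x_t^i) ≤ 0 for all t, τ ∈ {1,…,T}. Define V̂(x^1,…,x^n) = min_{t ∈ {1,…,T}} { v_t + Σ_{i=1}^n λ_t^i p_tᵀ (x^i − x_t^i) }. Then: (i) V̂ is concave and continuous on (ℝ^m)^n and strictly increasing in each block x^i; (ii) V̂(x_t^1,…,x_t^n) = v_t for every t; (iii) for every t, the joint response (x_t^1,…,x_t^n)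 maximizes V̂ over the joint budget set {(x^1,…,x^n) : p_tᵀ x^i ≤ p_tᵀ x_t^i for all i}; and consequently (iv) for every t and every agent i, x_t^i maximizes z ↦ V̂(x_t^1,…,x_t^{i−1}, z, x_t^{i+1},…,x_t^n) over {z ∈ ℝ^m : p_tᵀ z ≤ p_tᵀ x_t^i}, i.e., the data are consistent with a pure-strategy Nash equilibrium of the concave potential game with potential V̂. -/
open Finset

/-!
`V̂` is the lower envelope of the affine functions `y ↦ v_t + ℓ_t (y - x_t)`, where
`ℓ_t w = Σ_i λ_t^i p_tᵀ w^i`. A minimum of finitely many affine functions is concave and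
continuous, and it strictly increases along any direction on which every `ℓ_t` is positive,
which is the case for a nonzero nonnegative change of one block since `λ_t^i > 0` and `p_t > 0`.
The Afriat inequalities say that no affine piece lies below `v_t` at `x_t`, so `V̂ (x_t) = v_t`;
on the joint budget set of `t` the `t`-th piece is at most `v_t`, which gives the joint
maximization, and changing only the block of agent `i` stays in that budget set.
-/

theorem ConcaveOn.finset_inf' {𝕜 E β ι : Type*} [Semiring 𝕜] [PartialOrder 𝕜]
    [AddCommMonoid E] [SMul 𝕜 E] [AddCommMonoid β] [LinearOrder β] [IsOrderedAddMonoid β]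
    [Module 𝕜 β] [PosSMulMono 𝕜 β] {S : Set E} {s : Finset ι} (hs : s.Nonempty)
    {f : ι → E → β} (hf : ∀ t ∈ s, ConcaveOn 𝕜 S (f t)) :
    ConcaveOn 𝕜 S fun y => s.inf' hs fun t => f t y := by
  refine ⟨(hf _ hs.choose_spec).1, fun a ha b hb α β hα hβ hαβ => le_inf' _ _ fun t ht => ?_⟩
  calc α • s.inf' hs (fun t => f t a) + β • s.inf' hs (fun t => f t b)
      ≤ α • f t a + β • f t b := by gcongr <;> exact inf'_le _ ht
    _ ≤ f t (α • a + β • b) := (hf t ht).2 ha hb hα hβ hαβ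

theorem Finset.inf'_lt_inf'_of_forall_lt {α ι : Type*} [LinearOrder α] {s : Finset ι}
    (hs : s.Nonempty) {f g : ι → α} (h : ∀ t ∈ s, f t < g t) : s.inf' hs f < s.inf' hs g := by
  obtain ⟨t, ht, hg⟩ := exists_mem_eq_inf' hs g
  exact hg ▸ (inf'_le f ht).trans_lt (h t ht)

section AfriatPotential

variable {ι E : Type*} [AddCommGroup E] [Module ℝ E] {s : Finset ι} (hs : s.Nonempty)
  (v : ι → ℝ) (ℓ : ι → E →ₗ[ℝ] ℝ) (x : ι → E)

def afriatPotential (y : E) : ℝ :=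
  s.inf' hs fun t => v t + ℓ t (y - x t)

variable {hs v ℓ x}

theorem afriatPotential_le {t : ι} (ht : t ∈ s) (y : E) :
    afriatPotential hs v ℓ x y ≤ v t + ℓ t (y - x t) :=
  inf'_le _ ht

theorem afriatPotential_le_of_apply_sub_nonpos {t : ι} (ht : t ∈ s) {y : E}
    (hy : ℓ t (y - x t) ≤ 0) : afriatPotential hs v ℓ x y ≤ v t :=
  calc afriatPotential hs v ℓ x y ≤ v t + ℓ t (y - x t) := afriatPotential_le ht y
    _ ≤ v t := by linarith

theorem afriatPotential_apply_eq (hAf : ∀ t ∈ s, ∀ τ ∈ s, v τ ≤ v t + ℓ t (x τ - x t))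
    {t : ι} (ht : t ∈ s) : afriatPotential hs v ℓ x (x t) = v t :=
  le_antisymm (afriatPotential_le_of_apply_sub_nonpos ht (by simp))
    (le_inf' _ _ fun τ hτ => hAf τ hτ t ht)

theorem afriatPotential_lt_afriatPotential {a b : E} (h : ∀ t ∈ s, 0 < ℓ t (b - a)) :
    afriatPotential hs v ℓ x a < afriatPotential hs v ℓ x b :=
  inf'_lt_inf'_of_forall_lt hs fun t ht => by
    have := h t ht
    simp only [map_sub] at this ⊢
    linarith

theorem concaveOn_afriatPotential : ConcaveOn ℝ Set.univ (afriatPotential hs v ℓ x) :=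
  ConcaveOn.finset_inf' hs fun t _ => by
    have haffine : (fun y => v t + ℓ t (y - x t)) = ⇑(ℓ t) + fun _ => v t - ℓ t (x t) := by
      funext y
      simp only [Pi.add_apply, map_sub]
      ring
    exact haffine ▸ ((ℓ t).concaveOn convex_univ).add_const _

theorem continuous_afriatPotential [TopologicalSpace E] [ContinuousSub E]
    (hℓ : ∀ t ∈ s, Continuous (ℓ t)) : Continuous (afriatPotential hs v ℓ x) :=
  Continuous.finset_inf'_apply hs fun t ht =>
    continuous_const.add ((hℓ t ht).comp (continuous_sub_right _))

end AfriatPotential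

section WeightedPrice

variable {ι κ : Type*} [Fintype ι] [Fintype κ] (lam : ι → ℝ) (p : κ → ℝ)

def weightedPriceFunctional : (ι → κ → ℝ) →ₗ[ℝ] ℝ where
  toFun w := ∑ i, lam i * ∑ j, p j * w i j
  map_add' w w' := by simp only [Pi.add_apply, mul_add, sum_add_distrib]
  map_smul' c w := by
    simp only [Pi.smul_apply, smul_eq_mul, RingHom.id_apply, mul_sum]
    exact sum_congr rfl fun i _ => sum_congr rfl fun j _ => by ring

@[simp]
theorem weightedPriceFunctional_apply (w : ι → κ → ℝ) :
    weightedPriceFunctional lam p w = ∑ i, lam i * ∑ j, p j * w i j :=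
  rfl

variable {lam p}

theorem weightedPriceFunctional_update_sub_update [DecidableEq ι] (y : ι → κ → ℝ) (i : ι)
    (z z' : κ → ℝ) :
    weightedPriceFunctional lam p (Function.update y i z' - Function.update y i z) =
      lam i * ∑ j, p j * (z' j - z j) := by
  rw [weightedPriceFunctional_apply, Fintype.sum_eq_single i fun i' hi' => by simp [hi']]
  simp

theorem weightedPriceFunctional_update_sub_update_pos [DecidableEq ι] {i : ι}
    (hlam : 0 < lam i) (hp : ∀ j, 0 < p j) (y : ι → κ → ℝ) {z z' : κ → ℝ}
    (hle : ∀ j, z j ≤ z' j) (hne : z ≠ z') :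
    0 < weightedPriceFunctional lam p (Function.update y i z' - Function.update y i z) := by
  obtain ⟨j₀, hj₀⟩ : ∃ j, z j < z' j := by
    by_contra! h
    exact hne (funext fun j => (hle j).antisymm (h j))
  rw [weightedPriceFunctional_update_sub_update]
  refine mul_pos hlam (sum_pos' (fun j _ => ?_) ⟨j₀, mem_univ _, ?_⟩)
  · exact mul_nonneg (hp j).le (sub_nonneg.2 (hle j))
  · exact mul_pos (hp j₀) (sub_pos.2 hj₀)

theorem weightedPriceFunctional_sub_nonpos (hlam : ∀ i, 0 ≤ lam i) {y x : ι → κ → ℝ}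
    (h : ∀ i, ∑ j, p j * y i j ≤ ∑ j, p j * x i j) :
    weightedPriceFunctional lam p (y - x) ≤ 0 := by
  refine sum_nonpos fun i _ => mul_nonpos_of_nonneg_of_nonpos (hlam i) ?_
  simp only [Pi.sub_apply, mul_sub, sum_sub_distrib]
  linarith [h i]

end WeightedPrice

theorem Function.apply_update_le_apply {ι α β : Type*} [DecidableEq ι] [Preorder β]
    (g : α → β) (x : ι → α) {i : ι} {z : α} (h : g z ≤ g (x i)) (i' : ι) :
    g (Function.update x i z i') ≤ g (x i') := by
  rcases eq_or_ne i' i with rfl | hi'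
  · simpa
  · simp [hi']

/-- Multiagent Afriat Theorem, implication (2) ⟹ (3) ⟹ (1): feasibility of the
multi-agent Afriat inequalities with `λ_t^i > 0` yields the explicitly constructed
concave potential `V̂(x^1,…,x^n) = min_t { v_t + Σ_i λ_t^i p_tᵀ (x^i − x_t^i) }`,
which is concave, continuous, strictly increasing in each block, interpolates the
data (`V̂(x_t) = v_t`), and rationalizes the dataset both as joint maximization of
the potential over the joint budget set and as a pure-strategy Nash equilibrium
(each agent's observed response maximizes `V̂` in its own block over its budget
set). -/
theorem multiagent_afriat_constructed_potential
    (m n T : ℕ) (hT : 0 < T)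
    (p : Fin T → Fin m → ℝ) (hp : ∀ t j, 0 < p t j)
    (x : Fin T → Fin n → Fin m → ℝ)
    (v : Fin T → ℝ) (lam : Fin T → Fin n → ℝ) (hlam : ∀ t i, 0 < lam t i)
    (hAf : ∀ t τ,
      v τ - v t - ∑ i, lam t i * ∑ j, p t j * (x τ i j - x t i j) ≤ 0) :
    let Vhat : (Fin n → Fin m → ℝ) → ℝ := fun y =>
      Finset.univ.inf' ⟨⟨0, hT⟩, Finset.mem_univ _⟩
        (fun t => v t + ∑ i, lam t i * ∑ j, p t j * (y i j - x t i j))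
    ConcaveOn ℝ Set.univ Vhat ∧
    Continuous Vhat ∧
    (∀ (i : Fin n) (y : Fin n → Fin m → ℝ) (z z' : Fin m → ℝ),
      (∀ j, z j ≤ z' j) → z ≠ z' →
      Vhat (Function.update y i z) < Vhat (Function.update y i z')) ∧
    (∀ t, Vhat (x t) = v t) ∧
    (∀ t, ∀ y : Fin n → Fin m → ℝ,
      (∀ i, (∑ j, p t j * y i j) ≤ (∑ j, p t j * x t i j)) →
      Vhat y ≤ Vhat (x t)) ∧
    (∀ t (i : Fin n), ∀ z : Fin m → ℝ,
      (∑ j, p t j * z j) ≤ (∑ j, p t j * x t i j) →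
      Vhat (Function.update (x t) i z) ≤ Vhat (x t)) := by
  intro Vhat
  have hne : (univ : Finset (Fin T)).Nonempty := ⟨⟨0, hT⟩, mem_univ _⟩
  set V := afriatPotential hne v (fun t => weightedPriceFunctional (lam t) (p t)) x
  rw [show Vhat = V from rfl]
  have hAf' : ∀ t ∈ univ, ∀ τ ∈ univ,
      v τ ≤ v t + weightedPriceFunctional (lam t) (p t) (x τ - x t) := fun t _ τ _ => by
    simp only [weightedPriceFunctional_apply, Pi.sub_apply]
    linarith [hAf t τ]
  have hdata : ∀ t, V (x t) = v t := fun t => afriatPotential_apply_eq hAf' (mem_univ t)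
  have hbudget : ∀ t y, (∀ i, ∑ j, p t j * y i j ≤ ∑ j, p t j * x t i j) → V y ≤ V (x t) :=
    fun t y hy => hdata t ▸ afriatPotential_le_of_apply_sub_nonpos (mem_univ t)
      (weightedPriceFunctional_sub_nonpos (fun i => (hlam t i).le) hy)
  refine ⟨concaveOn_afriatPotential,
    continuous_afriatPotential fun t _ => LinearMap.continuous_of_finiteDimensional _,
    fun i y z z' hle hzz' => afriatPotential_lt_afriatPotential fun t _ =>
      weightedPriceFunctional_update_sub_update_pos (hlam t i) (hp t) y hle hzz',
    hdata, hbudget, fun t i z hz =>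
      hbudget t _ (Function.apply_update_le_apply (fun w => ∑ j, p t j * w j) (x t) hz)⟩
end
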